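/- arXiv:2405.07965 — 7 statements merged into one kernel-verified Lean document; each statement's English description precedes it below -/
import Mathlib

section
/- Let 1 ≤ k ≤ m and let y ∈ ℝ^m be sorted in nonincreasing order with T_k(y) > 0, and let ȳ := proj_{B_k}(y). Then ȳ is sorted in nonincreasing order, and there exist unique integers (k̄0, k̄1) forming the index pair of ȳ associated with k, with partition (ᾱ, β̄, γ̄) of {1,…,m}, and multipliers (μ̄, λ̄, θ̄) ∈ ℝ^m × ℝ × ℝ such that: ȳ_ᾱ = y_ᾱ − λ̄·1_ᾱ and μ̄_ᾱ = 1_ᾱ; ȳ_β̄ = y_β̄ − λ̄·μ̄_β̄ = θ̄·1_β̄ with μ̄_β̄ ∈ [0,1]^{|β̄|} and 1^⊤μ̄_β̄ = k − k̄0; ȳ_γ̄ = y_γ̄ and μ̄_γ̄ = 0; 1_ᾱ^⊤ y_ᾱ − k̄0·λ̄ + (k − k̄0)·θ̄ = 0; λ̄ > 0; and ȳ_{k̄0} > θ̄ > ȳ_{k̄1+1} (with conventions ȳ_0 := +∞, ȳ_{m+1} := −∞). -/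
open Filter Topology Matrix

noncomputable def topkSum {ι : Type*} [Fintype ι] (k : ℕ) (x : ι → ℝ) : ℝ :=
  sSup {v : ℝ | ∃ s : Finset ι, s.card = k ∧ v = ∑ i ∈ s, x i}

def Bk (m k : ℕ) : Set (Fin m → ℝ) := {x | topkSum k x ≤ 0}

noncomputable def sortDesc {m : ℕ} (x : Fin m → ℝ) : Fin m → ℝ :=
  fun i => (x ∘ Tuple.sort x) i.rev

noncomputable def ent {m : ℕ} (x : Fin m → ℝ) (i : ℕ) : ℝ :=
  if h : 1 ≤ i ∧ i ≤ m then x ⟨i - 1, by omega⟩ else 0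

noncomputable def entE {m : ℕ} (x : Fin m → ℝ) (i : ℕ) : EReal :=
  if h : 1 ≤ i ∧ i ≤ m then ((x ⟨i - 1, by omega⟩ : ℝ) : EReal)
  else if i = 0 then ⊤ else ⊥

def IsIndexPairOf {m : ℕ} (k : ℕ) (x : Fin m → ℝ) (k0 k1 : ℕ) : Prop :=
  k0 + 1 ≤ k ∧ k ≤ k1 ∧ k1 ≤ m ∧
  entE x (k0 + 1) < entE x k0 ∧
  (∀ i : ℕ, k0 + 1 ≤ i → i ≤ k1 → entE x i = entE x k) ∧
  entE x (k1 + 1) < entE x k1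

def IsEProjOn {m : ℕ} (S : Set (Fin m → ℝ)) (y p : Fin m → ℝ) : Prop :=
  p ∈ S ∧ ∀ z ∈ S, ∑ i, (y i - p i) ^ 2 ≤ ∑ i, (y i - z i) ^ 2

def ProjKKT {m : ℕ} (k : ℕ) (y ybar μ : Fin m → ℝ) (lam θ : ℝ) (k0 k1 : ℕ) : Prop :=
  IsIndexPairOf k ybar k0 k1 ∧
  (∀ i : Fin m, (i : ℕ) < k0 → ybar i = y i - lam ∧ μ i = 1) ∧
  (∀ i : Fin m, k0 ≤ (i : ℕ) → (i : ℕ) < k1 →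
      ybar i = y i - lam * μ i ∧ ybar i = θ ∧ 0 ≤ μ i ∧ μ i ≤ 1) ∧
  (∑ i : Fin m, (if k0 ≤ (i : ℕ) ∧ (i : ℕ) < k1 then μ i else 0)) = (k : ℝ) - (k0 : ℝ) ∧
  (∀ i : Fin m, k1 ≤ (i : ℕ) → ybar i = y i ∧ μ i = 0) ∧
  (∑ i : Fin m, (if (i : ℕ) < k0 then y i else 0)) - (k0 : ℝ) * lam + ((k : ℝ) - (k0 : ℝ)) * θ = 0 ∧
  0 < lam ∧
  (θ : EReal) < entE ybar k0 ∧ entE ybar (k1 + 1) < (θ : EReal)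

noncomputable def cvar {m : ℕ} (τ : ℝ) (g : Fin m → ℝ) : ℝ :=
  ⨅ t : ℝ, t + (1 / ((1 - τ) * m)) * ∑ j, max (g j - t) 0

namespace KKTAux

lemma topk_bddAbove {m k : ℕ} (x : Fin m → ℝ) :
    BddAbove {v : ℝ | ∃ s : Finset (Fin m), s.card = k ∧ v = ∑ i ∈ s, x i} := by
  have : {v : ℝ | ∃ s : Finset (Fin m), s.card = k ∧ v = ∑ i ∈ s, x i} =
      (fun s : Finset (Fin m) => ∑ i ∈ s, x i) '' {s | s.card = k} := by
    ext v; simp [eq_comm]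
  rw [this]
  exact ((Set.toFinite _).image _).bddAbove

lemma sum_le_topkSum {m k : ℕ} (x : Fin m → ℝ) (s : Finset (Fin m)) (hs : s.card = k) :
    ∑ i ∈ s, x i ≤ topkSum k x :=
  le_csSup (topk_bddAbove x) ⟨s, hs, rfl⟩

lemma exists_card_k {m k : ℕ} (hkm : k ≤ m) : ∃ s : Finset (Fin m), s.card = k := by
  obtain ⟨t, -, ht⟩ := Finset.exists_subset_card_eq
    (s := (Finset.univ : Finset (Fin m))) (n := k) (by simpa using hkm)
  exact ⟨t, ht⟩

lemma topkSum_le_iff {m k : ℕ} (hkm : k ≤ m) (x : Fin m → ℝ) (c : ℝ) :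
    topkSum k x ≤ c ↔ ∀ s : Finset (Fin m), s.card = k → ∑ i ∈ s, x i ≤ c := by
  constructor
  · intro h s hs
    exact (sum_le_topkSum x s hs).trans h
  · intro h
    obtain ⟨s0, hs0⟩ := exists_card_k (m := m) hkm
    exact csSup_le ⟨_, s0, hs0, rfl⟩ (by rintro v ⟨s, hs, rfl⟩; exact h s hs)

lemma card_firstK {m k : ℕ} (hkm : k ≤ m) :
    (Finset.univ.filter (fun i : Fin m => (i : ℕ) < k)).card = k := by
  rw [← Fintype.card_subtype]
  exact (Fintype.card_congr ⟨fun j => (⟨j.1.1, j.2⟩ : Fin k),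
    fun a => ⟨⟨a.1, lt_of_lt_of_le a.2 hkm⟩, a.2⟩,
    fun j => rfl, fun a => rfl⟩).trans (Fintype.card_fin k)

lemma mem_iff_lt_card_of_lower {m : ℕ} (s : Finset (Fin m))
    (hs : ∀ i j : Fin m, i ≤ j → j ∈ s → i ∈ s) (i : Fin m) :
    i ∈ s ↔ (i : ℕ) < s.card := by
  constructor
  · intro hi
    have h1 : Finset.Iic i ⊆ s := fun j hj => hs j i (Finset.mem_Iic.mp hj) hi
    have := Finset.card_le_card h1
    rw [Fin.card_Iic] at this; omega
  · intro hi
    by_contra hns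
    have h1 : s ⊆ Finset.Iio i := by
      intro j hj
      rw [Finset.mem_Iio]
      rcases lt_or_ge j i with h | h
      · exact h
      · exact absurd (hs i j h hj) hns
    have := Finset.card_le_card h1
    rw [Fin.card_Iio] at this; omega

lemma sum_firstK_le {m k : ℕ} (hk1 : 1 ≤ k) (hkm : k ≤ m)
    (x : Fin m → ℝ) (hx : Antitone x) (s : Finset (Fin m)) (hs : s.card = k) :
    ∑ i ∈ s, x i ≤ ∑ i ∈ Finset.univ.filter (fun i : Fin m => (i : ℕ) < k), x i := by
  set F := Finset.univ.filter (fun i : Fin m => (i : ℕ) < k) with hF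
  have hFc : F.card = k := card_firstK hkm
  set θ' := x ⟨k - 1, by omega⟩ with hθ'
  have hcards : (s \ F).card = (F \ s).card := by
    have h1 := Finset.card_sdiff_add_card_inter s F
    have h2 := Finset.card_sdiff_add_card_inter F s
    rw [Finset.inter_comm] at h2
    omega
  have h3 : ∑ i ∈ s \ F, x i ≤ (s \ F).card • θ' := by
    apply Finset.sum_le_card_nsmul
    intro i hi
    have : ¬ ((i : ℕ) < k) := by
      have := (Finset.mem_sdiff.mp hi).2
      simpa [hF] using this
    exact hx (by simp [Fin.le_def]; omega)
  have h4 : (F \ s).card • θ' ≤ ∑ i ∈ F \ s, x i := by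
    apply Finset.card_nsmul_le_sum
    intro i hi
    have : (i : ℕ) < k := by
      have := (Finset.mem_sdiff.mp hi).1
      simpa [hF] using this
    exact hx (by simp [Fin.le_def]; omega)
  have e1 : ∑ i ∈ s ∩ F, x i + ∑ i ∈ s \ F, x i = ∑ i ∈ s, x i :=
    Finset.sum_inter_add_sum_sdiff s F x
  have e2 : ∑ i ∈ F ∩ s, x i + ∑ i ∈ F \ s, x i = ∑ i ∈ F, x i :=
    Finset.sum_inter_add_sum_sdiff F s x
  rw [Finset.inter_comm] at e2
  rw [hcards] at h3
  linarith

lemma topkSum_antitone {m k : ℕ} (hk1 : 1 ≤ k) (hkm : k ≤ m)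
    (x : Fin m → ℝ) (hx : Antitone x) :
    topkSum k x = ∑ i ∈ Finset.univ.filter (fun i : Fin m => (i : ℕ) < k), x i := by
  apply le_antisymm
  · exact (topkSum_le_iff hkm x _).mpr (fun s hs => sum_firstK_le hk1 hkm x hx s hs)
  · exact sum_le_topkSum x _ (card_firstK hkm)

lemma entE_eq {m : ℕ} (x : Fin m → ℝ) {i : ℕ} (h1 : 1 ≤ i) (h2 : i ≤ m) :
    entE x i = ((x ⟨i - 1, by omega⟩ : ℝ) : EReal) := dif_pos ⟨h1, h2⟩

lemma entE_zero {m : ℕ} (x : Fin m → ℝ) : entE x 0 = ⊤ := by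
  simp [entE]

lemma entE_top {m : ℕ} (x : Fin m → ℝ) {i : ℕ} (h : m < i) : entE x i = ⊥ := by
  rw [entE, dif_neg (by omega), if_neg (by omega)]

end KKTAux

open KKTAux

set_option maxHeartbeats 4000000 in
/-- Let `y` be sorted nonincreasingly with `T_k(y) > 0` and let `ȳ` be the
Euclidean projection of `y` onto `B_k`.  Then `ȳ` is sorted nonincreasingly, its index pair
`(k̄0, k̄1)` associated with `k` exists and is unique, and there are multipliers
`(μ̄, λ̄, θ̄)` satisfying the projection KKT conditions. -/
theorem projection_sorted_and_KKT
    (m k : ℕ) (hk1 : 1 ≤ k) (hkm : k ≤ m)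
    (y ybar : Fin m → ℝ) (hsorted : Antitone y) (hpos : 0 < topkSum k y)
    (hproj : IsEProjOn (Bk m k) y ybar) :
    Antitone ybar ∧
    (∃! p : ℕ × ℕ, IsIndexPairOf k ybar p.1 p.2) ∧
    (∃ (k0 k1 : ℕ) (μ : Fin m → ℝ) (lam θ : ℝ), ProjKKT k y ybar μ lam θ k0 k1) := by
  classical
  obtain ⟨hmem, hmin⟩ := hproj
  have hybar_le : topkSum k ybar ≤ 0 := hmem
  have hkm1 : k - 1 < m := by omega
  have hy_ne : ∃ i, y i ≠ ybar i := by
    by_contra h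
    push_neg at h
    have : y = ybar := funext h
    rw [this] at hpos
    linarith
  have hpossq : 0 < ∑ i, (y i - ybar i) ^ 2 := by
    obtain ⟨i0, hi0⟩ := hy_ne
    refine Finset.sum_pos' (fun i _ => sq_nonneg _) ⟨i0, Finset.mem_univ _, ?_⟩
    have : y i0 - ybar i0 ≠ 0 := sub_ne_zero.mpr hi0
    positivity
  -- Step B : topkSum ybar = 0
  have hT0 : topkSum k ybar = 0 := by
    rcases lt_or_eq_of_le hybar_le with hlt | heq
    · exfalso
      set C := topkSum k y with hC
      set T := topkSum k ybar with hT
      have hCT : 0 < C - T := by linarith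
      set ε : ℝ := -T / (C - T) with hε
      have hεpos : 0 < ε := div_pos (by linarith) hCT
      have hεlt : ε < 1 := by
        rw [hε, div_lt_one hCT]; linarith
      have hεCT : ε * (C - T) = -T := by
        rw [hε]; field_simp
      set z : Fin m → ℝ := fun i => ybar i + ε * (y i - ybar i) with hz
      have hzmem : z ∈ Bk m k := by
        show topkSum k z ≤ 0
        rw [topkSum_le_iff hkm]
        intro s hs
        have h1 : ∑ i ∈ s, z i = (1 - ε) * ∑ i ∈ s, ybar i + ε * ∑ i ∈ s, y i := by
          simp only [hz]
          rw [Finset.mul_sum, Finset.mul_sum, ← Finset.sum_add_distrib]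
          exact Finset.sum_congr rfl (fun i _ => by ring)
        have h2 : ∑ i ∈ s, ybar i ≤ T := sum_le_topkSum _ s hs
        have h3 : ∑ i ∈ s, y i ≤ C := sum_le_topkSum _ s hs
        have h4 : (1 - ε) * ∑ i ∈ s, ybar i ≤ (1 - ε) * T :=
          mul_le_mul_of_nonneg_left h2 (by linarith)
        have h5 : ε * ∑ i ∈ s, y i ≤ ε * C := mul_le_mul_of_nonneg_left h3 hεpos.le
        have h6 : (1 - ε) * T + ε * C = 0 := by nlinarith [hεCT]
        linarith [h1, h4, h5]
      have hcmp := hmin z hzmem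
      have hexp : ∑ i, (y i - z i) ^ 2 = (1 - ε) ^ 2 * ∑ i, (y i - ybar i) ^ 2 := by
        rw [Finset.mul_sum]
        refine Finset.sum_congr rfl (fun i _ => ?_)
        simp only [hz]
        ring
      rw [hexp] at hcmp
      nlinarith [mul_pos (mul_pos hεpos (show (0:ℝ) < 2 - ε by linarith)) hpossq]
    · exact heq
  -- Step C : Antitone ybar
  have hanti : Antitone ybar := by
    intro i j hij
    by_contra hcon
    push_neg at hcon
    have hij' : i ≠ j := by rintro rfl; exact lt_irrefl _ hcon
    set a := ybar i with ha
    set b := ybar j with hb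
    set c : ℝ := (a + b) / 2 with hc
    set w : Fin m → ℝ :=
      fun l => ybar l + ((if l = i then c - a else 0) + (if l = j then c - b else 0)) with hw
    have hws : ∀ s : Finset (Fin m), ∑ l ∈ s, w l =
        ∑ l ∈ s, ybar l + ((if i ∈ s then c - a else 0) + (if j ∈ s then c - b else 0)) := by
      intro s
      simp only [hw]
      rw [Finset.sum_add_distrib, Finset.sum_add_distrib,
        Finset.sum_ite_eq' s i (fun _ => c - a), Finset.sum_ite_eq' s j (fun _ => c - b)]
    have hwmem : w ∈ Bk m k := by
      show topkSum k w ≤ 0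
      rw [topkSum_le_iff hkm]
      intro s hs
      have hsle : ∑ l ∈ s, ybar l ≤ 0 := (sum_le_topkSum _ s hs).trans hybar_le
      rw [hws]
      by_cases hi : i ∈ s <;> by_cases hj : j ∈ s
      · simp only [if_pos hi, if_pos hj]
        have : c - a + (c - b) = 0 := by rw [hc]; ring
        linarith
      · simp only [if_pos hi, if_neg hj]
        have hs'card : (insert j (s.erase i)).card = k := by
          rw [Finset.card_insert_of_notMem (fun hmem' => hj (Finset.mem_of_mem_erase hmem')),
            Finset.card_erase_of_mem hi, hs]
          omega
        have hsum' : ∑ l ∈ insert j (s.erase i), ybar l = b + (∑ l ∈ s, ybar l - a) := by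
          rw [Finset.sum_insert (fun hmem' => hj (Finset.mem_of_mem_erase hmem')),
            Finset.sum_erase_eq_sub hi]
        have hle' : ∑ l ∈ insert j (s.erase i), ybar l ≤ 0 :=
          (sum_le_topkSum _ _ hs'card).trans hybar_le
        rw [hsum'] at hle'
        have : c - a = (b - a) / 2 := by rw [hc]; ring
        linarith
      · simp only [if_neg hi, if_pos hj]
        have : c - b = (a - b) / 2 := by rw [hc]; ring
        linarith
      · simp only [if_neg hi, if_neg hj]
        linarith
    have hwi : w i = c := by
      simp only [hw, if_pos, if_neg hij', eq_self_iff_true, if_true, add_zero]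
      linarith [ha]
    have hwj : w j = c := by
      simp only [hw, if_pos, if_neg (Ne.symm hij'), eq_self_iff_true, if_true, zero_add]
      linarith [hb]
    have hwother : ∀ l : Fin m, l ≠ i → l ≠ j → w l = ybar l := by
      intro l h1 h2
      simp only [hw, if_neg h1, if_neg h2, add_zero]
    have hsplit : ∑ l, ((y l - w l) ^ 2 - (y l - ybar l) ^ 2) =
        ((y i - c) ^ 2 - (y i - a) ^ 2) + ((y j - c) ^ 2 - (y j - b) ^ 2) := by
      rw [← Finset.sum_subset (Finset.subset_univ ({i, j} : Finset (Fin m)))]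
      · rw [Finset.sum_pair hij', hwi, hwj, ha, hb]
      · intro l _ hl
        simp only [Finset.mem_insert, Finset.mem_singleton] at hl
        push_neg at hl
        rw [hwother l hl.1 hl.2]
        ring
    have hsum_eq : ∑ l, (y l - w l) ^ 2 = ∑ l, (y l - ybar l) ^ 2 +
        (((y i - c) ^ 2 - (y i - a) ^ 2) + ((y j - c) ^ 2 - (y j - b) ^ 2)) := by
      rw [← hsplit, ← Finset.sum_add_distrib]
      exact Finset.sum_congr rfl (fun l _ => by ring)
    have hyij : y j ≤ y i := hsorted hij
    have hcmp := hmin w hwmem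
    rw [hsum_eq] at hcmp
    have hab : a < b := hcon
    have hΔ : (0:ℝ) ≤ (y i - c) ^ 2 - (y i - a) ^ 2 + ((y j - c) ^ 2 - (y j - b) ^ 2) := by
      linarith
    rw [hc] at hΔ
    nlinarith [hΔ, mul_pos (sub_pos.mpr hab) (sub_pos.mpr hab),
      mul_nonneg (sub_nonneg.mpr hyij) (sub_pos.mpr hab).le]
  -- ===== structural setup =====
  set d : Fin m → ℝ := fun i => y i - ybar i with hd
  set θ : ℝ := ybar ⟨k - 1, hkm1⟩ with hθ
  set A : Finset (Fin m) := Finset.univ.filter (fun i => θ < ybar i) with hA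
  set AB : Finset (Fin m) := Finset.univ.filter (fun i => θ ≤ ybar i) with hAB
  set k0 := A.card with hk0
  set k1 := AB.card with hk1'
  have hAchar : ∀ i : Fin m, i ∈ A ↔ (i : ℕ) < k0 := by
    intro i
    refine mem_iff_lt_card_of_lower A (fun i j hle hj => ?_) i
    simp only [hA, Finset.mem_filter, Finset.mem_univ, true_and] at hj ⊢
    exact lt_of_lt_of_le hj (hanti hle)
  have hABchar : ∀ i : Fin m, i ∈ AB ↔ (i : ℕ) < k1 := by
    intro i
    refine mem_iff_lt_card_of_lower AB (fun i j hle hj => ?_) i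
    simp only [hAB, Finset.mem_filter, Finset.mem_univ, true_and] at hj ⊢
    exact le_trans hj (hanti hle)
  have hk0k : k0 < k := by
    by_contra h
    push_neg at h
    have hmem' : (⟨k - 1, hkm1⟩ : Fin m) ∈ A := (hAchar _).mpr (by simp; omega)
    simp only [hA, Finset.mem_filter, Finset.mem_univ, true_and] at hmem'
    exact lt_irrefl _ hmem'
  have hkk1 : k ≤ k1 := by
    have hmem' : (⟨k - 1, hkm1⟩ : Fin m) ∈ AB := by
      simp only [hAB, Finset.mem_filter, Finset.mem_univ, true_and]
      exact le_refl _
    have := (hABchar _).mp hmem'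
    simp at this
    omega
  have hk1m : k1 ≤ m := le_trans (Finset.card_le_univ AB) (by simp)
  have hαval : ∀ i : Fin m, (i : ℕ) < k0 → θ < ybar i := by
    intro i h
    have := (hAchar i).mpr h
    simpa [hA] using this
  have hβval : ∀ i : Fin m, k0 ≤ (i : ℕ) → (i : ℕ) < k1 → ybar i = θ := by
    intro i h1 h2
    have hin : i ∈ AB := (hABchar i).mpr h2
    have hnin : i ∉ A := fun h => by have := (hAchar i).mp h; omega
    simp only [hAB, Finset.mem_filter, Finset.mem_univ, true_and] at hin
    simp only [hA, Finset.mem_filter, Finset.mem_univ, true_and, not_lt] at hnin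
    linarith
  have hγval : ∀ i : Fin m, k1 ≤ (i : ℕ) → ybar i < θ := by
    intro i h
    have hnin : i ∉ AB := fun hh => by have := (hABchar i).mp hh; omega
    simp only [hAB, Finset.mem_filter, Finset.mem_univ, true_and, not_le] at hnin
    exact hnin
  set F : Finset (Fin m) := Finset.univ.filter (fun i : Fin m => (i : ℕ) < k) with hF
  have hFc : F.card = k := card_firstK hkm
  have hsumF : ∑ i ∈ F, ybar i = 0 := by
    rw [← topkSum_antitone hk1 hkm ybar hanti]
    exact hT0
  have hAF : A ⊆ F := by
    intro i hi
    have := (hAchar i).mp hi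
    simp only [hF, Finset.mem_filter, Finset.mem_univ, true_and]
    omega
  have hkk0cast : ((k - k0 : ℕ) : ℝ) = (k : ℝ) - (k0 : ℝ) := by
    rw [Nat.cast_sub hk0k.le]
  have hsumA : ∑ i ∈ A, ybar i + ((k : ℝ) - (k0 : ℝ)) * θ = 0 := by
    have hsd : ∑ i ∈ F \ A, ybar i + ∑ i ∈ A, ybar i = ∑ i ∈ F, ybar i :=
      Finset.sum_sdiff hAF
    have hcardFA : (F \ A).card = k - k0 := by
      rw [Finset.card_sdiff_of_subset hAF, hFc]
    have hconst : ∑ i ∈ F \ A, ybar i = ((k - k0 : ℕ) : ℝ) * θ := by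
      rw [Finset.sum_congr rfl (fun i hi => ?_), Finset.sum_const, hcardFA, nsmul_eq_mul]
      have h1 := (Finset.mem_sdiff.mp hi).1
      have h2 := (Finset.mem_sdiff.mp hi).2
      simp only [hF, Finset.mem_filter, Finset.mem_univ, true_and] at h1
      have h3 : ¬ ((i : ℕ) < k0) := fun hh => h2 ((hAchar i).mpr hh)
      exact hβval i (by omega) (by omega)
    rw [hconst, hkk0cast] at hsd
    linarith [hsd, hsumF]
  set Bset : Finset (Fin m) := AB \ A with hBset
  have hBchar : ∀ i : Fin m, i ∈ Bset ↔ (k0 ≤ (i : ℕ) ∧ (i : ℕ) < k1) := by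
    intro i
    rw [hBset, Finset.mem_sdiff, hABchar, hAchar]
    omega
  -- ===== master perturbation lemma =====
  have master : ∀ v : Fin m → ℝ,
      (∀ s : Finset (Fin m), s.card = k → A ⊆ s → s ⊆ AB → ∑ i ∈ s, v i ≤ 0) →
      ∑ i, d i * v i ≤ 0 := by
    intro v hv
    have key : ∀ s : Finset (Fin m), s.card = k → ∑ i ∈ s, ybar i = 0 →
        A ⊆ s ∧ s ⊆ AB := by
      intro s hs hzero
      have e3 : ∑ i ∈ s, (ybar i - θ) = -((k : ℝ) * θ) := by
        rw [Finset.sum_sub_distrib, Finset.sum_const, hs, hzero, nsmul_eq_mul]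
        ring
      have e4 : ∑ i ∈ A, (ybar i - θ) = -((k : ℝ) * θ) := by
        rw [Finset.sum_sub_distrib, Finset.sum_const, nsmul_eq_mul]
        have hcA : ((A.card : ℕ) : ℝ) = (k0 : ℝ) := by rw [← hk0]
        rw [hcA]
        linarith [hsumA]
      -- split the sum over s
      have hsP : s.filter (fun i => θ < ybar i) = s ∩ A := by
        ext l
        simp only [Finset.mem_filter, Finset.mem_inter, hA, Finset.mem_univ, true_and]
      have e1 : ∑ i ∈ s, (ybar i - θ) =
          ∑ i ∈ s ∩ A, (ybar i - θ) + ∑ i ∈ s.filter (fun i => ¬ θ < ybar i), (ybar i - θ) := by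
        rw [← hsP, Finset.sum_filter_add_sum_filter_not s (fun i => θ < ybar i)]
      have e5 : ∑ i ∈ s.filter (fun i => ¬ θ < ybar i), (ybar i - θ) =
          ∑ i ∈ s.filter (fun i => ybar i < θ), (ybar i - θ) := by
        symm
        apply Finset.sum_subset
        · intro i hi
          simp only [Finset.mem_filter] at hi ⊢
          exact ⟨hi.1, not_lt.mpr hi.2.le⟩
        · intro i hi hni
          simp only [Finset.mem_filter, not_and, not_lt] at hi hni
          have : ybar i = θ := le_antisymm hi.2 (hni hi.1)
          rw [this]
          ring
      have e2 : ∑ i ∈ A, (ybar i - θ) =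
          ∑ i ∈ A ∩ s, (ybar i - θ) + ∑ i ∈ A \ s, (ybar i - θ) :=
        (Finset.sum_inter_add_sum_sdiff A s _).symm
      rw [Finset.inter_comm] at e2
      have hbalance : ∑ i ∈ A \ s, (ybar i - θ) = ∑ i ∈ s.filter (fun i => ybar i < θ), (ybar i - θ) := by
        rw [e5] at e1
        rw [e3] at e1
        rw [e4] at e2
        linarith
      have hApos : ∀ i ∈ A \ s, 0 < ybar i - θ := by
        intro i hi
        have := (Finset.mem_sdiff.mp hi).1
        simp only [hA, Finset.mem_filter, Finset.mem_univ, true_and] at this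
        linarith
      have hNneg : ∀ i ∈ s.filter (fun i => ybar i < θ), ybar i - θ < 0 := by
        intro i hi
        have := (Finset.mem_filter.mp hi).2
        linarith
      have hAsub : A \ s = ∅ := by
        by_contra hne
        have hne' : (A \ s).Nonempty := Finset.nonempty_of_ne_empty hne
        have h1 : 0 < ∑ i ∈ A \ s, (ybar i - θ) := Finset.sum_pos hApos hne'
        have h2 : ∑ i ∈ s.filter (fun i => ybar i < θ), (ybar i - θ) ≤ 0 :=
          Finset.sum_nonpos (fun i hi => (hNneg i hi).le)
        linarith [hbalance]
      have hNsub : s.filter (fun i => ybar i < θ) = ∅ := by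
        by_contra hne
        have hne' : (s.filter (fun i => ybar i < θ)).Nonempty := Finset.nonempty_of_ne_empty hne
        have h1 : ∑ i ∈ s.filter (fun i => ybar i < θ), (ybar i - θ) < 0 :=
          Finset.sum_neg hNneg hne'
        have h2 : 0 ≤ ∑ i ∈ A \ s, (ybar i - θ) :=
          Finset.sum_nonneg (fun i hi => (hApos i hi).le)
        linarith [hbalance]
      constructor
      · exact (Finset.sdiff_eq_empty_iff_subset).mp hAsub
      · intro i hi
        simp only [hAB, Finset.mem_filter, Finset.mem_univ, true_and]
        by_contra hlt
        push_neg at hlt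
        have : i ∈ s.filter (fun i => ybar i < θ) := Finset.mem_filter.mpr ⟨hi, hlt⟩
        rw [hNsub] at this
        exact absurd this (Finset.notMem_empty i)
    -- feasibility radius
    set Q : Finset (Finset (Fin m)) := Finset.univ.filter (fun s => s.card = k) with hQ
    have hQne : Q.Nonempty := ⟨F, by simp [hQ, hFc]⟩
    set g : Finset (Fin m) → ℝ :=
      fun s => if 0 < ∑ i ∈ s, v i then (-∑ i ∈ s, ybar i) / (∑ i ∈ s, v i) else 1 with hg
    have hgpos : ∀ s ∈ Q, 0 < g s := by
      intro s hsQ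
      have hs : s.card = k := by simpa [hQ] using hsQ
      simp only [hg]
      split_ifs with hsv
      · apply div_pos _ hsv
        have hle : ∑ i ∈ s, ybar i ≤ 0 := by
          calc ∑ i ∈ s, ybar i ≤ topkSum k ybar := sum_le_topkSum _ s hs
          _ ≤ 0 := hybar_le
        rcases lt_or_eq_of_le hle with h | h
        · linarith
        · exfalso
          obtain ⟨hAs, hsAB⟩ := key s hs h
          linarith [hv s hs hAs hsAB]
      · norm_num
    set ε₀ := Q.inf' hQne g with hε₀
    have hε₀pos : 0 < ε₀ := (Finset.lt_inf'_iff hQne).mpr hgpos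
    have feas : ∀ ε : ℝ, 0 < ε → ε ≤ ε₀ → (fun i => ybar i + ε * v i) ∈ Bk m k := by
      intro ε hε hεle
      show topkSum k _ ≤ 0
      rw [topkSum_le_iff hkm]
      intro s hs
      have hsplit : ∑ i ∈ s, (ybar i + ε * v i) = ∑ i ∈ s, ybar i + ε * ∑ i ∈ s, v i := by
        rw [Finset.sum_add_distrib, Finset.mul_sum]
      rw [hsplit]
      have hble : ∑ i ∈ s, ybar i ≤ 0 := by
        calc ∑ i ∈ s, ybar i ≤ topkSum k ybar := sum_le_topkSum _ s hs
        _ ≤ 0 := hybar_le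
      rcases le_or_gt (∑ i ∈ s, v i) 0 with hsv | hsv
      · nlinarith
      · have hsQ : s ∈ Q := by simp [hQ, hs]
        have h1 : ε₀ ≤ g s := Finset.inf'_le g hsQ
        have h2 : g s = (-∑ i ∈ s, ybar i) / (∑ i ∈ s, v i) := by
          simp only [hg, if_pos hsv]
        have h3 : ε ≤ (-∑ i ∈ s, ybar i) / (∑ i ∈ s, v i) := by
          rw [← h2]; linarith
        have h4 := (le_div_iff₀ hsv).mp h3
        linarith
    -- conclude the variational inequality
    by_contra hD
    push_neg at hD
    set D := ∑ i, d i * v i with hDdef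
    set S := ∑ i : Fin m, (v i) ^ 2 with hS
    have hSnn : 0 ≤ S := Finset.sum_nonneg fun i _ => sq_nonneg _
    set ε := min ε₀ (D / (S + 1)) with hεdef
    have hεpos : 0 < ε := lt_min hε₀pos (div_pos hD (by linarith))
    have hεle : ε ≤ ε₀ := min_le_left _ _
    have hcmp := hmin _ (feas ε hεpos hεle)
    have hexp : ∑ i, (y i - (ybar i + ε * v i)) ^ 2 =
        ∑ i, (y i - ybar i) ^ 2 - 2 * ε * D + ε ^ 2 * S := by
      have hterm : ∀ i : Fin m, (y i - (ybar i + ε * v i)) ^ 2 =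
          (y i - ybar i) ^ 2 - 2 * ε * (d i * v i) + ε ^ 2 * (v i) ^ 2 := by
        intro i
        simp only [hd]
        ring
      calc ∑ i, (y i - (ybar i + ε * v i)) ^ 2
          = ∑ i : Fin m, ((y i - ybar i) ^ 2 - 2 * ε * (d i * v i) + ε ^ 2 * (v i) ^ 2) :=
            Finset.sum_congr rfl (fun i _ => hterm i)
        _ = ∑ i, (y i - ybar i) ^ 2 - 2 * ε * D + ε ^ 2 * S := by
            rw [Finset.sum_add_distrib, Finset.sum_sub_distrib, ← Finset.mul_sum,
              ← Finset.mul_sum, hDdef, hS]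
    rw [hexp] at hcmp
    have hεS : ε ≤ D / (S + 1) := min_le_right _ _
    have hεS' : ε * (S + 1) ≤ D := (le_div_iff₀ (by linarith)).mp hεS
    nlinarith [mul_pos hεpos hD, sq_nonneg ε, mul_le_mul_of_nonneg_left hεS' hεpos.le]
  -- ===== consequences of the variational inequality =====
  have hK : (0:ℝ) < (k : ℝ) - (k0 : ℝ) := by
    have : (k0 : ℝ) < (k : ℝ) := by exact_mod_cast hk0k
    linarith
  have hcardB : ∀ s : Finset (Fin m), s.card = k → A ⊆ s → s ⊆ AB →
      ∑ l ∈ s, (if l ∈ Bset then (1 : ℝ) else 0) = (k : ℝ) - (k0 : ℝ) := by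
    intro s hs hAs hsAB
    rw [Finset.sum_boole]
    have hfil : s.filter (fun l => l ∈ Bset) = s \ A := by
      ext l
      simp only [Finset.mem_filter, Finset.mem_sdiff, hBset]
      constructor
      · rintro ⟨h1, h2, h3⟩; exact ⟨h1, h3⟩
      · rintro ⟨h1, h2⟩; exact ⟨h1, hsAB h1, h2⟩
    rw [hfil, Finset.card_sdiff_of_subset hAs, hs, ← hk0, Nat.cast_sub hk0k.le]
  have hip1 : ∀ (j0 : Fin m) (cc : ℝ), ∑ i, d i * (if i = j0 then cc else 0) = d j0 * cc := by
    intro j0 cc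
    simp only [mul_ite, mul_zero]
    rw [Finset.sum_ite_eq' Finset.univ j0 (fun i => d i * cc)]
    simp
  have hip2 : ∑ i, d i * (if i ∈ Bset then (1:ℝ) else 0) = ∑ l ∈ Bset, d l := by
    simp only [mul_ite, mul_one, mul_zero]
    rw [Finset.sum_ite_mem, Finset.univ_inter]
  have hγzero : ∀ i : Fin m, k1 ≤ (i : ℕ) → d i = 0 := by
    intro i0 hi0
    have hnAB : i0 ∉ AB := fun h => by have := (hABchar _).mp h; omega
    have h1 := master (fun l => if l = i0 then (1:ℝ) else 0) (by
      intro s hs hAs hsAB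
      rw [Finset.sum_ite_eq' s i0 (fun _ => (1:ℝ)), if_neg (fun h => hnAB (hsAB h))])
    have h2 := master (fun l => if l = i0 then (-1:ℝ) else 0) (by
      intro s hs hAs hsAB
      rw [Finset.sum_ite_eq' s i0 (fun _ => (-1:ℝ)), if_neg (fun h => hnAB (hsAB h))])
    rw [hip1] at h1 h2
    nlinarith [h1, h2]
  have hβnonneg : ∀ j ∈ Bset, 0 ≤ d j := by
    intro j hj
    have h1 := master (fun l => if l = j then (-1:ℝ) else 0) (by
      intro s hs hAs hsAB
      rw [Finset.sum_ite_eq' s j (fun _ => (-1:ℝ))]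
      split_ifs <;> norm_num)
    rw [hip1] at h1
    nlinarith [h1]
  have hβub : ∀ j ∈ Bset, ((k:ℝ) - (k0:ℝ)) * d j ≤ ∑ l ∈ Bset, d l := by
    intro j hj
    have h1 := master
      (fun l => (if l = j then ((k:ℝ) - (k0:ℝ)) else 0) - (if l ∈ Bset then 1 else 0)) (by
      intro s hs hAs hsAB
      rw [Finset.sum_sub_distrib, Finset.sum_ite_eq' s j (fun _ => ((k:ℝ) - (k0:ℝ))),
        hcardB s hs hAs hsAB]
      split_ifs <;> linarith [hK])
    have hexp : ∑ i, d i * ((if i = j then ((k:ℝ) - (k0:ℝ)) else 0) - (if i ∈ Bset then 1 else 0))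
        = d j * ((k:ℝ) - (k0:ℝ)) - ∑ l ∈ Bset, d l := by
      rw [Finset.sum_congr rfl (fun i (_ : i ∈ Finset.univ) => mul_sub (d i) _ _),
        Finset.sum_sub_distrib, hip1, hip2]
    rw [hexp] at h1
    linarith
  have hαeq : ∀ i ∈ A, ((k:ℝ) - (k0:ℝ)) * d i = ∑ l ∈ Bset, d l := by
    intro i0 hi0
    have h1 := master
      (fun l => (if l = i0 then ((k:ℝ) - (k0:ℝ)) else 0) - (if l ∈ Bset then 1 else 0)) (by
      intro s hs hAs hsAB
      rw [Finset.sum_sub_distrib, Finset.sum_ite_eq' s i0 (fun _ => ((k:ℝ) - (k0:ℝ))),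
        hcardB s hs hAs hsAB, if_pos (hAs hi0)]
      linarith)
    have h2 := master
      (fun l => (if l ∈ Bset then (1:ℝ) else 0) - (if l = i0 then ((k:ℝ) - (k0:ℝ)) else 0)) (by
      intro s hs hAs hsAB
      rw [Finset.sum_sub_distrib, Finset.sum_ite_eq' s i0 (fun _ => ((k:ℝ) - (k0:ℝ))),
        hcardB s hs hAs hsAB, if_pos (hAs hi0)]
      linarith)
    have hexp1 : ∑ i, d i * ((if i = i0 then ((k:ℝ) - (k0:ℝ)) else 0) - (if i ∈ Bset then 1 else 0))
        = d i0 * ((k:ℝ) - (k0:ℝ)) - ∑ l ∈ Bset, d l := by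
      rw [Finset.sum_congr rfl (fun i (_ : i ∈ Finset.univ) => mul_sub (d i) _ _),
        Finset.sum_sub_distrib, hip1, hip2]
    have hexp2 : ∑ i, d i * ((if i ∈ Bset then (1:ℝ) else 0) - (if i = i0 then ((k:ℝ) - (k0:ℝ)) else 0))
        = ∑ l ∈ Bset, d l - d i0 * ((k:ℝ) - (k0:ℝ)) := by
      rw [Finset.sum_congr rfl (fun i (_ : i ∈ Finset.univ) => mul_sub (d i) _ _),
        Finset.sum_sub_distrib, hip1, hip2]
    rw [hexp1] at h1
    rw [hexp2] at h2
    linarith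
  set SB : ℝ := ∑ l ∈ Bset, d l with hSB
  have hSBnn : 0 ≤ SB := Finset.sum_nonneg hβnonneg
  set lam : ℝ := SB / ((k:ℝ) - (k0:ℝ)) with hlam
  have hlamnn : 0 ≤ lam := div_nonneg hSBnn hK.le
  have hlampos : 0 < lam := by
    rcases lt_or_eq_of_le hlamnn with h | h
    · exact h
    · exfalso
      have hSB0 : SB = 0 := by
        rw [hlam] at h
        field_simp at h
        linarith [h]
      have hdB : ∀ i ∈ Bset, d i = 0 :=
        (Finset.sum_eq_zero_iff_of_nonneg hβnonneg).mp hSB0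
      have hdall : ∀ i : Fin m, d i = 0 := by
        intro i
        rcases lt_or_ge ((i : ℕ)) k0 with hc | hc
        · have hiA : i ∈ A := (hAchar i).mpr hc
          have := hαeq i hiA
          rw [hSB0] at this
          nlinarith [hK]
        · rcases lt_or_ge ((i : ℕ)) k1 with hc2 | hc2
          · exact hdB i ((hBchar i).mpr ⟨hc, hc2⟩)
          · exact hγzero i hc2
      have hyeq : y = ybar := by
        funext i
        have := hdall i
        simp only [hd] at this
        linarith
      rw [hyeq, hT0] at hpos
      linarith
  have hlamne : lam ≠ 0 := ne_of_gt hlampos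
  have hSBlam : SB = ((k:ℝ) - (k0:ℝ)) * lam := by
    rw [hlam]
    field_simp
  have hdA : ∀ i ∈ A, d i = lam := by
    intro i hi
    have h1 := hαeq i hi
    rw [hSBlam] at h1
    have := mul_left_cancel₀ (ne_of_gt hK) h1
    exact this
  -- entE facts
  have hentk : entE ybar k = (θ : EReal) := by
    rw [entE_eq ybar hk1 hkm, hθ]
  have hθk0E : (θ : EReal) < entE ybar k0 := by
    rcases Nat.eq_zero_or_pos k0 with h0 | h0
    · rw [h0, entE_zero]
      exact EReal.coe_lt_top θ
    · rw [entE_eq ybar h0 (by omega)]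
      exact_mod_cast hαval ⟨k0 - 1, by omega⟩ (show k0 - 1 < k0 by omega)
  have hθk1E : entE ybar (k1 + 1) < (θ : EReal) := by
    rcases eq_or_lt_of_le hk1m with hm | hm
    · rw [entE_top ybar (by omega)]
      exact EReal.bot_lt_coe θ
    · rw [entE_eq ybar (by omega) (by omega)]
      exact_mod_cast hγval ⟨k1 + 1 - 1, by omega⟩ (show k1 ≤ k1 + 1 - 1 by omega)
  have hIP : IsIndexPairOf k ybar k0 k1 := by
    refine ⟨by omega, hkk1, hk1m, ?_, ?_, ?_⟩
    · rw [entE_eq ybar (by omega) (by omega)]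
      have hv : ybar ⟨k0 + 1 - 1, by omega⟩ = θ :=
        hβval _ (show k0 ≤ k0 + 1 - 1 by omega) (show k0 + 1 - 1 < k1 by omega)
      rw [hv]
      exact hθk0E
    · intro i hi1 hi2
      rw [hentk, entE_eq ybar (by omega) (by omega)]
      have hv : ybar ⟨i - 1, by omega⟩ = θ :=
        hβval _ (show k0 ≤ i - 1 by omega) (show i - 1 < k1 by omega)
      rw [hv]
    · have hv : ybar ⟨k1 - 1, by omega⟩ = θ :=
        hβval _ (show k0 ≤ k1 - 1 by omega) (show k1 - 1 < k1 by omega)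
      rw [entE_eq ybar (by omega) hk1m, hv]
      exact hθk1E
  set μ : Fin m → ℝ :=
    fun i => if (i : ℕ) < k0 then (1:ℝ) else if (i : ℕ) < k1 then d i / lam else 0 with hμ
  refine ⟨hanti, ⟨(k0, k1), hIP, ?_⟩, k0, k1, μ, lam, θ, hIP, ?_, ?_, ?_, ?_, ?_, hlampos, hθk0E, hθk1E⟩
  · -- uniqueness of the index pair
    rintro ⟨p, q⟩ ⟨hpk, hkq, hqm, hlt1, hall, hlt2⟩
    simp only at hpk hkq hqm hlt1 hall hlt2 ⊢
    have hq1 : 1 ≤ q := by omega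
    have hqθ : ybar ⟨q - 1, by omega⟩ = θ := by
      have h := hall q (by omega) (le_refl q)
      rw [hentk, entE_eq ybar (by omega) hqm] at h
      exact_mod_cast h
    have hpθ : ybar ⟨p, by omega⟩ = θ := by
      have h := hall (p + 1) (le_refl _) (by omega)
      rw [hentk, entE_eq ybar (by omega) (by omega)] at h
      exact_mod_cast h
    have hk0p : k0 ≤ p := by
      by_contra hcon'
      push_neg at hcon'
      have := hαval ⟨p, by omega⟩ hcon'
      rw [hpθ] at this
      exact lt_irrefl _ this
    have hpk0 : p ≤ k0 := by
      rcases Nat.eq_zero_or_pos p with h0 | h0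
      · omega
      · have e1 : entE ybar (p + 1) = (θ : EReal) := by
          rw [entE_eq ybar (by omega) (by omega)]
          exact_mod_cast congrArg Real.toEReal hpθ
        have e2 : entE ybar p = ((ybar ⟨p - 1, by omega⟩ : ℝ) : EReal) :=
          entE_eq ybar h0 (by omega)
        rw [e1, e2] at hlt1
        have h3 : θ < ybar ⟨p - 1, by omega⟩ := by exact_mod_cast hlt1
        have hmem'' : (⟨p - 1, by omega⟩ : Fin m) ∈ A := by
          simp only [hA, Finset.mem_filter, Finset.mem_univ, true_and]
          exact h3
        have := (hAchar _).mp hmem''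
        simp only at this
        omega
    have hqk1 : q ≤ k1 := by
      have hmem'' : (⟨q - 1, by omega⟩ : Fin m) ∈ AB := by
        simp only [hAB, Finset.mem_filter, Finset.mem_univ, true_and]
        rw [hqθ]
      have := (hABchar _).mp hmem''
      simp only at this
      omega
    have hk1q : k1 ≤ q := by
      by_contra hcon'
      push_neg at hcon'
      have hqm' : q < m := by omega
      have e3 : entE ybar (q + 1) = ((ybar ⟨q, by omega⟩ : ℝ) : EReal) :=
        entE_eq ybar (by omega) (by omega)
      have e4 : entE ybar q = (θ : EReal) := by
        rw [entE_eq ybar hq1 hqm]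
        exact congrArg Real.toEReal hqθ
      rw [e3, e4] at hlt2
      have h5 : ybar ⟨q, by omega⟩ < θ := by exact_mod_cast hlt2
      have h6 := (hABchar ⟨q, by omega⟩).mpr (by simpa using hcon')
      simp only [hAB, Finset.mem_filter, Finset.mem_univ, true_and] at h6
      linarith
    rw [Prod.mk.injEq]
    exact ⟨by omega, by omega⟩
  · -- alpha block
    intro i hi
    have hiA : i ∈ A := (hAchar i).mpr hi
    have hdi := hdA i hiA
    simp only [hd] at hdi
    constructor
    · linarith
    · simp only [hμ]
      rw [if_pos hi]
  · -- beta block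
    intro i h1 h2
    have hiB : i ∈ Bset := (hBchar i).mpr ⟨h1, h2⟩
    have hμi : μ i = d i / lam := by
      simp only [hμ]
      rw [if_neg (by omega), if_pos h2]
    have hybi : ybar i = θ := hβval i h1 h2
    have hdnn := hβnonneg i hiB
    have hdub : d i ≤ lam := by
      have h := hβub i hiB
      rw [hSBlam] at h
      nlinarith [hK]
    refine ⟨?_, hybi, ?_, ?_⟩
    · rw [hμi]
      have hcc : lam * (d i / lam) = d i := by field_simp
      rw [hcc]
      simp only [hd]
      ring
    · rw [hμi]
      exact div_nonneg hdnn hlampos.le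
    · rw [hμi, div_le_one hlampos]
      exact hdub
  · -- multiplier sum
    have hcong : ∀ i : Fin m, (if k0 ≤ (i : ℕ) ∧ (i : ℕ) < k1 then μ i else 0)
        = (if i ∈ Bset then d i / lam else 0) := by
      intro i
      by_cases hib : i ∈ Bset
      · have hc := (hBchar i).mp hib
        rw [if_pos hc, if_pos hib]
        simp only [hμ]
        rw [if_neg (by omega), if_pos hc.2]
      · rw [if_neg (fun hc => hib ((hBchar i).mpr hc)), if_neg hib]
    rw [Finset.sum_congr rfl (fun i _ => hcong i), Finset.sum_ite_mem, Finset.univ_inter,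
      ← Finset.sum_div, ← hSB, hSBlam]
    field_simp
  · -- gamma block
    intro i hi
    have hdi := hγzero i hi
    simp only [hd] at hdi
    constructor
    · linarith
    · simp only [hμ]
      rw [if_neg (by omega), if_neg (by omega)]
  · -- the scalar equation
    have hfil0 : Finset.univ.filter (fun i : Fin m => (i : ℕ) < k0) = A := by
      ext i
      simp only [Finset.mem_filter, Finset.mem_univ, true_and]
      exact ((hAchar i).symm)
    rw [← Finset.sum_filter, hfil0]
    have h1 : ∀ i ∈ A, y i = ybar i + lam := by
      intro i hi
      have := hdA i hi
      simp only [hd] at this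
      linarith
    have hyA : ∑ i ∈ A, y i = ∑ i ∈ A, ybar i + (k0 : ℝ) * lam := by
      calc ∑ i ∈ A, y i = ∑ i ∈ A, (ybar i + lam) := Finset.sum_congr rfl h1
        _ = ∑ i ∈ A, ybar i + (k0 : ℝ) * lam := by
            rw [Finset.sum_add_distrib, Finset.sum_const, nsmul_eq_mul, ← hk0]
    rw [hyA]
    linarith [hsumA]
end

section
/- (Lemma 2.2, case c) Let 1 ≤ k ≤ m, let y ∈ ℝ^m be sorted in nonincreasing order with T_k(y) > 0, and let ȳ := proj_{B_k}(y) have index pair (k̄0, k̄1) associated with k and partition (ᾱ, β̄, γ̄). Assume k = k̄1. Then the Jacobian of proj_{B_k} at y is the block-diagonal matrix diag( I_{|ᾱ|+|β̄|} − c c^⊤ / ‖c‖₂² , I_{|γ̄|} ), where c := 1_{|ᾱ|+|β̄|} is the all-ones vector of length |ᾱ|+|β̄|. -/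
open Filter Topology Matrix

/-! The projection `ȳ` of a sorted `y` is again sorted, and `k̄₁ = k` says that its `k`-th entry
strictly exceeds its `(k+1)`-st. Near such a point `B_k` coincides with the half-space
`{x | x₁ + ⋯ + xₖ ≤ 0}`, so `ȳ` is also the projection of `y` onto that half-space, namely
`y - (T_k(y)/k) · 1_{1..k}`. For every `z` near `y` this explicit point is still separated at `k`,
hence lies in `B_k` and is the projection of `z` onto it: `proj_{B_k}` is linear near `y`. -/

open Finset in
theorem Finset.sum_le_sum_of_card_eq_of_forall_le {ι M : Type*} [DecidableEq ι]
    [AddCommMonoid M] [LinearOrder M] [IsOrderedAddMonoid M] {s t : Finset ι} {f : ι → M}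
    (hst : #s = #t) (h : ∀ j ∈ s \ t, ∀ i ∈ t \ s, f j ≤ f i) :
    ∑ i ∈ s, f i ≤ ∑ i ∈ t, f i := by
  rw [← sum_inter_add_sum_sdiff s t, ← sum_inter_add_sum_sdiff t s, inter_comm t s]
  gcongr 1
  have hcard := card_sdiff_comm hst
  rcases (t \ s).eq_empty_or_nonempty with hts | hts
  · rw [hts, card_empty, card_eq_zero] at hcard
    simp [hts, hcard]
  · calc ∑ j ∈ s \ t, f j ≤ #(s \ t) • (t \ s).inf' hts f :=
          sum_le_card_nsmul _ _ _ fun j hj => le_inf' hts f (h j hj)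
      _ = #(t \ s) • (t \ s).inf' hts f := by rw [hcard]
      _ ≤ ∑ i ∈ t \ s, f i := card_nsmul_le_sum _ _ _ fun i hi => inf'_le f hi

section topkSum

variable {ι : Type*} [Fintype ι] {k : ℕ}

theorem bddAbove_finsetSums (k : ℕ) (x : ι → ℝ) :
    BddAbove {v : ℝ | ∃ s : Finset ι, s.card = k ∧ v = ∑ i ∈ s, x i} :=
  ((Set.finite_range fun s : Finset ι => ∑ i ∈ s, x i).subset
    (by rintro v ⟨s, -, rfl⟩; exact ⟨s, rfl⟩)).bddAbove

theorem sum_le_topkSum (x : ι → ℝ) {s : Finset ι} (hs : s.card = k) :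
    ∑ i ∈ s, x i ≤ topkSum k x :=
  le_csSup (bddAbove_finsetSums k x) ⟨s, hs, rfl⟩

theorem topkSum_le (hk : k ≤ Fintype.card ι) {x : ι → ℝ} {a : ℝ}
    (h : ∀ s : Finset ι, s.card = k → ∑ i ∈ s, x i ≤ a) : topkSum k x ≤ a := by
  obtain ⟨s, -, hs⟩ := Finset.exists_subset_card_eq (s := Finset.univ) (n := k) hk
  refine csSup_le ⟨_, s, hs, rfl⟩ ?_
  rintro v ⟨s, hs, rfl⟩
  exact h s hs

theorem topkSum_eq_sum_of_forall_le [DecidableEq ι] {x : ι → ℝ} {t : Finset ι} (ht : t.card = k)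
    (hsep : ∀ i ∈ t, ∀ j ∉ t, x j ≤ x i) : topkSum k x = ∑ i ∈ t, x i := by
  refine le_antisymm (topkSum_le (ht ▸ t.card_le_univ) fun s hs => ?_) (sum_le_topkSum x ht)
  refine Finset.sum_le_sum_of_card_eq_of_forall_le (hs.trans ht.symm) fun j hj i hi => ?_
  exact hsep i (Finset.mem_sdiff.1 hi).1 j (Finset.mem_sdiff.1 hj).2

theorem topkSum_comp_perm (x : ι → ℝ) (σ : Equiv.Perm ι) : topkSum k (x ∘ σ) = topkSum k x := by
  unfold topkSum
  congr 1
  ext v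
  constructor
  · rintro ⟨s, hs, rfl⟩
    exact ⟨s.map σ.toEmbedding, by simp [hs], by simp⟩
  · rintro ⟨s, hs, rfl⟩
    exact ⟨s.map σ.symm.toEmbedding, by simp [hs], by simp⟩

theorem convexOn_topkSum (hk : k ≤ Fintype.card ι) :
    ConvexOn ℝ Set.univ (topkSum k : (ι → ℝ) → ℝ) := by
  refine ⟨convex_univ, fun x _ y _ a b ha hb _ => topkSum_le hk fun s hs => ?_⟩
  calc ∑ i ∈ s, (a • x + b • y) i = a * ∑ i ∈ s, x i + b * ∑ i ∈ s, y i := by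
        simp [Finset.sum_add_distrib, Finset.mul_sum]
    _ ≤ a • topkSum k x + b • topkSum k y := by
        simp only [smul_eq_mul]
        gcongr <;> exact sum_le_topkSum _ hs

end topkSum

theorem convex_Bk {m k : ℕ} (hkm : k ≤ m) : Convex ℝ (Bk m k) := by
  simpa [Bk] using (convexOn_topkSum (ι := Fin m) (by simpa using hkm)).convex_le 0

theorem comp_swap_mem_Bk {m k : ℕ} {x : Fin m → ℝ} (hx : x ∈ Bk m k) (a b : Fin m) :
    x ∘ Equiv.swap a b ∈ Bk m k := by
  simpa [Bk, topkSum_comp_perm] using hx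

theorem dotProduct_sub_smul_self {n R : Type*} [Fintype n] [CommRing R] (u v : n → R) (t : R) :
    (u - t • v) ⬝ᵥ (u - t • v) = u ⬝ᵥ u - 2 * t * (u ⬝ᵥ v) + t ^ 2 * (v ⬝ᵥ v) := by
  simp only [sub_dotProduct, dotProduct_sub, smul_dotProduct, dotProduct_smul, smul_eq_mul,
    dotProduct_comm v u]
  ring

theorem sum_sq_sub_comp_swap {m : ℕ} (y p : Fin m → ℝ) {a b : Fin m} (hab : a ≠ b) :
    ∑ i, (y i - (p ∘ Equiv.swap a b) i) ^ 2
      = ∑ i, (y i - p i) ^ 2 + 2 * (y a - y b) * (p a - p b) := by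
  rw [← sub_eq_iff_eq_add', ← Finset.sum_sub_distrib,
    ← Finset.sum_subset (Finset.subset_univ {a, b}), Finset.sum_pair hab]
  · simp only [Function.comp_apply, Equiv.swap_apply_left, Equiv.swap_apply_right]
    ring
  · intro i _ hi
    simp only [Finset.mem_insert, Finset.mem_singleton, not_or] at hi
    simp [Equiv.swap_apply_of_ne_of_ne hi.1 hi.2]

theorem isEProjOn_iff_dotProduct {m : ℕ} {S : Set (Fin m → ℝ)} {y p : Fin m → ℝ} :
    IsEProjOn S y p ↔ p ∈ S ∧ ∀ z ∈ S, (y - p) ⬝ᵥ (y - p) ≤ (y - z) ⬝ᵥ (y - z) := by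
  simp [IsEProjOn, dotProduct, sq]

namespace IsEProjOn

variable {m : ℕ} {S T : Set (Fin m → ℝ)} {y p q w : Fin m → ℝ}

theorem mono (hp : IsEProjOn T y p) (hST : S ⊆ T) (hpS : p ∈ S) : IsEProjOn S y p :=
  ⟨hpS, fun z hz => hp.2 z (hST hz)⟩

theorem dotProduct_nonpos (hp : IsEProjOn S y p)
    (hw : ∀ᶠ t in 𝓝[>] (0 : ℝ), p + t • (w - p) ∈ S) : (y - p) ⬝ᵥ (w - p) ≤ 0 := by
  have hle : ∀ᶠ t in 𝓝[>] (0 : ℝ), 2 * ((y - p) ⬝ᵥ (w - p)) ≤ t * ((w - p) ⬝ᵥ (w - p)) := by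
    filter_upwards [hw, self_mem_nhdsWithin] with t ht (htpos : 0 < t)
    have hmin := (isEProjOn_iff_dotProduct.1 hp).2 _ ht
    rw [show y - (p + t • (w - p)) = (y - p) - t • (w - p) by abel,
      dotProduct_sub_smul_self] at hmin
    nlinarith
  have hlim : Tendsto (fun t : ℝ => t * ((w - p) ⬝ᵥ (w - p))) (𝓝[>] 0) (𝓝 0) := by
    simpa using ((continuous_mul_const ((w - p) ⬝ᵥ (w - p))).tendsto 0).mono_left
      nhdsWithin_le_nhds
  linarith [ge_of_tendsto hlim hle]

theorem dotProduct_nonpos_of_convex (hS : Convex ℝ S) (hp : IsEProjOn S y p) (hw : w ∈ S) :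
    (y - p) ⬝ᵥ (w - p) ≤ 0 :=
  hp.dotProduct_nonpos <| Filter.mem_of_superset (Ioo_mem_nhdsGT one_pos) fun _ ht =>
    hS.add_smul_sub_mem hp.1 hw (Set.Ioo_subset_Icc_self ht)

theorem of_dotProduct_nonpos (hq : q ∈ S) (h : ∀ w ∈ S, (y - q) ⬝ᵥ (w - q) ≤ 0) :
    IsEProjOn S y q := by
  refine isEProjOn_iff_dotProduct.2 ⟨hq, fun w hw => ?_⟩
  have hsq : 0 ≤ (w - q) ⬝ᵥ (w - q) := Finset.sum_nonneg fun i _ => mul_self_nonneg _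
  have := dotProduct_sub_smul_self (y - q) (w - q) 1
  rw [one_smul, sub_sub_sub_cancel_right] at this
  nlinarith [h w hw]

theorem unique (hS : Convex ℝ S) (hp : IsEProjOn S y p) (hq : IsEProjOn S y q) : p = q := by
  have hpq := hp.dotProduct_nonpos_of_convex hS hq.1
  have hqp := hq.dotProduct_nonpos_of_convex hS hp.1
  have hsq : (q - p) ⬝ᵥ (q - p) = (y - p) ⬝ᵥ (q - p) + (y - q) ⬝ᵥ (p - q) := by
    rw [← neg_sub q p, dotProduct_neg, ← sub_eq_add_neg, ← sub_dotProduct, sub_sub_sub_cancel_left]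
  have hzero : (q - p) ⬝ᵥ (q - p) = 0 :=
    le_antisymm (by linarith) (Finset.sum_nonneg fun i _ => mul_self_nonneg _)
  exact (sub_eq_zero.1 (dotProduct_self_eq_zero.1 hzero)).symm

/-- Swapping two entries of `p` that are ordered against `y` would bring `p` closer to `y`. -/
theorem antitone (hS : Convex ℝ S) (hperm : ∀ x ∈ S, ∀ a b, x ∘ Equiv.swap a b ∈ S)
    (hy : Antitone y) (hp : IsEProjOn S y p) : Antitone p := by
  intro a b hab
  by_contra! hlt
  have hab' : a ≠ b := by rintro rfl; exact lt_irrefl _ hlt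
  have hswap : IsEProjOn S y (p ∘ Equiv.swap a b) := by
    refine ⟨hperm p hp.1 a b, fun z hz => le_trans ?_ (hp.2 z hz)⟩
    rw [sum_sq_sub_comp_swap y p hab']
    nlinarith [hy hab]
  have := congrFun (hp.unique hS hswap) a
  simp only [Function.comp_apply, Equiv.swap_apply_left] at this
  exact hlt.ne this

end IsEProjOn

section head

variable {m k : ℕ}

def headSet (m k : ℕ) : Finset (Fin m) := {i | (i : ℕ) < k}

@[simp]
theorem mem_headSet {i : Fin m} : i ∈ headSet m k ↔ (i : ℕ) < k := by
  simp [headSet]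

theorem card_headSet (hkm : k ≤ m) : (headSet m k).card = k := by
  simp [headSet, Fin.card_filter_val_lt, hkm]

def headHalfspace (m k : ℕ) : Set (Fin m → ℝ) := {x | ∑ i ∈ headSet m k, x i ≤ 0}

theorem convex_headHalfspace : Convex ℝ (headHalfspace m k) :=
  convex_halfSpace_le ⟨fun x y => Finset.sum_add_distrib, fun c x => by simp [Finset.mul_sum]⟩ 0

theorem Bk_subset_headHalfspace (hkm : k ≤ m) : Bk m k ⊆ headHalfspace m k :=
  fun x hx => (sum_le_topkSum x (card_headSet hkm)).trans hx

theorem mem_Bk_of_mem_headHalfspace (hkm : k ≤ m) {x : Fin m → ℝ} (hx : x ∈ headHalfspace m k)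
    (hsep : ∀ i ∈ headSet m k, ∀ j ∉ headSet m k, x j ≤ x i) : x ∈ Bk m k := by
  show topkSum k x ≤ 0
  rwa [topkSum_eq_sum_of_forall_le (card_headSet hkm) hsep]

theorem Antitone.le_of_mem_headSet {x : Fin m → ℝ} (hx : Antitone x) :
    ∀ i ∈ headSet m k, ∀ j ∉ headSet m k, x j ≤ x i := fun i hi j hj =>
  hx (Fin.le_def.2 (by simp only [mem_headSet] at hi hj; omega))

noncomputable def headCentering (m k : ℕ) (z : Fin m → ℝ) : Fin m → ℝ :=
  fun i => if (i : ℕ) < k then z i - (∑ l ∈ headSet m k, z l) / k else z i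

theorem sum_headCentering (hk : 0 < k) (hkm : k ≤ m) (z : Fin m → ℝ) :
    ∑ i ∈ headSet m k, headCentering m k z i = 0 := by
  unfold headCentering
  rw [Finset.sum_congr rfl fun i hi => if_pos (mem_headSet.1 hi), Finset.sum_sub_distrib,
    Finset.sum_const, card_headSet hkm, nsmul_eq_mul, mul_div_cancel₀ _ (by positivity), sub_self]

theorem isEProjOn_headHalfspace_headCentering (hk : 0 < k) (hkm : k ≤ m) {z : Fin m → ℝ}
    (hz : 0 ≤ ∑ i ∈ headSet m k, z i) :
    IsEProjOn (headHalfspace m k) z (headCentering m k z) := by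
  refine .of_dotProduct_nonpos (sum_headCentering hk hkm z).le fun w hw => ?_
  have hshift : z - headCentering m k z
      = fun i : Fin m => if (i : ℕ) < k then (∑ l ∈ headSet m k, z l) / k else 0 := by
    ext i; simp only [headCentering, Pi.sub_apply]; split_ifs <;> ring
  calc (z - headCentering m k z) ⬝ᵥ (w - headCentering m k z)
      = (∑ l ∈ headSet m k, z l) / k * ∑ i ∈ headSet m k, (w - headCentering m k z) i := by
        rw [hshift, dotProduct, Finset.mul_sum]
        simp only [headSet, Finset.sum_filter, ite_mul, zero_mul]
    _ = (∑ l ∈ headSet m k, z l) / k * ∑ i ∈ headSet m k, w i := by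
        rw [Pi.sub_def, Finset.sum_sub_distrib, sum_headCentering hk hkm, sub_zero]
    _ ≤ 0 := mul_nonpos_of_nonneg_of_nonpos (by positivity) hw

theorem isEProjOn_Bk_headCentering (hk : 0 < k) (hkm : k ≤ m) {z : Fin m → ℝ}
    (hz : 0 ≤ ∑ i ∈ headSet m k, z i)
    (hsep : ∀ i ∈ headSet m k, ∀ j ∉ headSet m k, headCentering m k z j ≤ headCentering m k z i) :
    IsEProjOn (Bk m k) z (headCentering m k z) :=
  (isEProjOn_headHalfspace_headCentering hk hkm hz).mono (Bk_subset_headHalfspace hkm)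
    (mem_Bk_of_mem_headHalfspace hkm (sum_headCentering hk hkm z).le hsep)

end head

theorem mulVec_eq_headCentering {m k : ℕ} (c : Fin k → ℝ) (hc : ∀ i, c i = 1) (z : Fin m → ℝ) :
    (Matrix.of fun i j : Fin m =>
        if h : (i : ℕ) < k ∧ (j : ℕ) < k then
          (if i = j then 1 else 0) - c ⟨(i : ℕ), h.1⟩ * c ⟨(j : ℕ), h.2⟩ / (∑ l, c l ^ 2)
        else if i = j then 1 else 0) *ᵥ z = headCentering m k z := by
  ext i
  have hentry : ∀ j : Fin m, (if h : (i : ℕ) < k ∧ (j : ℕ) < k then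
        (if i = j then 1 else 0) - c ⟨(i : ℕ), h.1⟩ * c ⟨(j : ℕ), h.2⟩ / (∑ l, c l ^ 2)
      else if i = j then 1 else 0) * z j
      = (if i = j then z j else 0) - if (i : ℕ) < k ∧ (j : ℕ) < k then z j / k else 0 := by
    intro j
    simp only [hc, one_pow, Finset.sum_const, Finset.card_univ, Fintype.card_fin, nsmul_eq_mul,
      mul_one]
    split_ifs <;> ring
  simp only [mulVec, dotProduct, Matrix.of_apply, hentry, Finset.sum_sub_distrib,
    Finset.sum_ite_eq, Finset.mem_univ, if_true, headCentering]
  split_ifs with hi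
  · simp [hi, headSet, Finset.sum_filter, Finset.sum_div, ite_div]
  · simp [hi]

theorem eventually_forall_le_of_forall_lt {X ι : Type*} [TopologicalSpace X] [Finite ι]
    {s : Finset ι} {f : X → ι → ℝ} {a : X} (hf : ContinuousAt f a)
    (h : ∀ i ∈ s, ∀ j ∉ s, f a j < f a i) : ∀ᶠ x in 𝓝 a, ∀ i ∈ s, ∀ j ∉ s, f x j ≤ f x i := by
  have hij : ∀ i j, ∀ᶠ x in 𝓝 a, i ∈ s → j ∉ s → f x j < f x i := by
    intro i j
    by_cases hi : i ∈ s
    · by_cases hj : j ∉ s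
      · filter_upwards [((continuous_apply j).continuousAt.comp hf).eventually_lt
          ((continuous_apply i).continuousAt.comp hf) (h i hi j hj)] with x hx using fun _ _ => hx
      · exact .of_forall fun _ _ h' => absurd h' hj
    · exact .of_forall fun _ h' => absurd h' hi
  filter_upwards [eventually_all.2 fun i => eventually_all.2 (hij i)] with x hx i hi j hj
  exact (hx i j hi hj).le

theorem IsIndexPairOf.lt_of_mem_headSet {m k k0 : ℕ} {x : Fin m → ℝ}
    (hpair : IsIndexPairOf k x k0 k) (hx : Antitone x) :
    ∀ i ∈ headSet m k, ∀ j ∉ headSet m k, x j < x i := by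
  intro i hi j hj
  rw [mem_headSet] at hi hj
  have hkm : k < m := by omega
  have hgap := hpair.2.2.2.2.2
  simp only [entE, dif_pos (show 1 ≤ k + 1 ∧ k + 1 ≤ m by omega),
    dif_pos (show 1 ≤ k ∧ k ≤ m by omega), EReal.coe_lt_coe_iff] at hgap
  calc x j ≤ x ⟨k, hkm⟩ := hx (Fin.le_def.2 (by dsimp only; omega))
    _ < x ⟨k - 1, by omega⟩ := hgap
    _ ≤ x i := hx (Fin.le_def.2 (by dsimp only; omega))

/-- Near a strictly separated `p`, `Bk m k` coincides with `headHalfspace m k`; convexity turns the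
resulting local optimality of `p` over the half-space into global optimality. -/
theorem eq_headCentering_of_isEProjOn_Bk {m k : ℕ} (hk : 0 < k) (hkm : k ≤ m)
    {y p : Fin m → ℝ} (hp : IsEProjOn (Bk m k) y p)
    (hsep : ∀ i ∈ headSet m k, ∀ j ∉ headSet m k, p j < p i)
    (hy : 0 ≤ ∑ i ∈ headSet m k, y i) : p = headCentering m k y := by
  have hH : IsEProjOn (headHalfspace m k) y p := by
    refine .of_dotProduct_nonpos (Bk_subset_headHalfspace hkm hp.1) fun w hw => ?_
    refine hp.dotProduct_nonpos ?_
    have hnear : ∀ᶠ t in 𝓝 (0 : ℝ), ∀ i ∈ headSet m k, ∀ j ∉ headSet m k,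
        (p + t • (w - p)) j ≤ (p + t • (w - p)) i :=
      eventually_forall_le_of_forall_lt (by fun_prop) (by simpa using hsep)
    filter_upwards [nhdsWithin_le_nhds hnear, Ioo_mem_nhdsGT one_pos] with t hsep' ht
    exact mem_Bk_of_mem_headHalfspace hkm (convex_headHalfspace.add_smul_sub_mem
      (Bk_subset_headHalfspace hkm hp.1) hw (Set.Ioo_subset_Icc_self ht)) hsep'
  exact hH.unique convex_headHalfspace (isEProjOn_headHalfspace_headCentering hk hkm hy)

theorem proj_jacobian_case_c_general
    (m k : ℕ) (hk1 : 1 ≤ k) (hkm : k ≤ m)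
    (P : (Fin m → ℝ) → (Fin m → ℝ)) (hP : ∀ z, IsEProjOn (Bk m k) z (P z))
    (y ybar : Fin m → ℝ) (hsorted : Antitone y) (hpos : 0 < topkSum k y)
    (hybar : P y = ybar)
    (k0 k1 : ℕ)
    (hpair : IsIndexPairOf k ybar k0 k1)
    (hkeq : k = k1)
    (c : Fin k1 → ℝ) (hc : ∀ i, c i = 1) :
    HasFDerivAt P
      (LinearMap.toContinuousLinearMap (Matrix.mulVecLin (Matrix.of fun i j : Fin m =>
        if h : (i : ℕ) < k1 ∧ (j : ℕ) < k1 then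
          (if i = j then 1 else 0) -
            c ⟨(i : ℕ), h.1⟩ * c ⟨(j : ℕ), h.2⟩ / (∑ l, c l ^ 2)
        else if i = j then 1 else 0))) y := by
  subst hkeq
  set L := LinearMap.toContinuousLinearMap (Matrix.mulVecLin (Matrix.of fun i j : Fin m =>
    if h : (i : ℕ) < k ∧ (j : ℕ) < k then
      (if i = j then 1 else 0) - c ⟨(i : ℕ), h.1⟩ * c ⟨(j : ℕ), h.2⟩ / (∑ l, c l ^ 2)
    else if i = j then 1 else 0))
  have hL (z : Fin m → ℝ) : L z = headCentering m k z := mulVec_eq_headCentering c hc z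
  have hy : 0 < ∑ i ∈ headSet m k, y i := by
    rwa [← topkSum_eq_sum_of_forall_le (card_headSet hkm) hsorted.le_of_mem_headSet]
  have hproj : IsEProjOn (Bk m k) y ybar := hybar ▸ hP y
  have hybar_sep := hpair.lt_of_mem_headSet
    (hproj.antitone (convex_Bk hkm) (fun x hx => comp_swap_mem_Bk hx) hsorted)
  have hLy : L y = ybar :=
    (hL y).trans (eq_headCentering_of_isEProjOn_Bk hk1 hkm hproj hybar_sep hy.le).symm
  have hev : P =ᶠ[𝓝 y] L := by
    have hsum : Continuous fun z : Fin m → ℝ => ∑ i ∈ headSet m k, z i := by fun_prop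
    filter_upwards [continuousAt_const.eventually_lt hsum.continuousAt hy,
      eventually_forall_le_of_forall_lt L.continuous.continuousAt (hLy ▸ hybar_sep)] with z hz hsep
    simp only [hL] at hsep ⊢
    exact (hP z).unique (convex_Bk hkm) (isEProjOn_Bk_headCentering hk1 hkm hz.le hsep)
  exact L.hasFDerivAt.congr_of_eventuallyEq hev

/-- Lemma 2.2, case c: sorted `y` with `T_k(y) > 0`, projection `ȳ` with index
pair `(k̄0, k̄1)` and `k = k̄1`.  The Jacobian of `proj_{B_k}` at `y` is
`diag(I_{|ᾱ|+|β̄|} - c cᵀ/‖c‖₂², I_{|γ̄|})` with `c` the all-ones vector of length `|ᾱ|+|β̄|`. -/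
theorem proj_jacobian_case_c
    (m k : ℕ) (hk1 : 1 ≤ k) (hkm : k ≤ m)
    (P : (Fin m → ℝ) → (Fin m → ℝ)) (hP : ∀ z, IsEProjOn (Bk m k) z (P z))
    (y ybar : Fin m → ℝ) (hsorted : Antitone y) (hpos : 0 < topkSum k y)
    (hybar : P y = ybar)
    (k0 k1 : ℕ) (hk0 : k0 < k) (hkk1 : k ≤ k1) (hk1m : k1 ≤ m)
    (hpair : IsIndexPairOf k ybar k0 k1)
    (hkeq : k = k1)
    (c : Fin k1 → ℝ) (hc : ∀ i, c i = 1) :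
    HasFDerivAt P
      (LinearMap.toContinuousLinearMap (Matrix.mulVecLin (Matrix.of fun i j : Fin m =>
        if h : (i : ℕ) < k1 ∧ (j : ℕ) < k1 then
          (if i = j then 1 else 0) -
            c ⟨(i : ℕ), h.1⟩ * c ⟨(j : ℕ), h.2⟩ / (∑ l, c l ^ 2)
        else if i = j then 1 else 0))) y :=
  proj_jacobian_case_c_general m k hk1 hkm P hP y ybar hsorted hpos hybar k0 k1 hpair hkeq c hc
end

section
/- (Lemma 3.1, first part) Let g ∈ ℝ^m, let g↓ be its nonincreasing rearrangement, and let 1 ≤ k ≤ m be an integer. Let P := { y* ∈ B_k : y* minimizes ‖max(g↓ − y, 0)‖₂² over y ∈ B_k }, where the maximum is taken componentwise, and let ȳ be the (unique) minimizer of ‖g↓ − y‖₂² over y ∈ B_k, i.e., ȳ = proj_{B_k}(g↓). Then ȳ ∈ P. -/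
open Filter Topology Matrix

/-!
Since `T_k` is monotone, `B_k` is a lower set, so any `z ∈ B_k` may be replaced by `min g↓ z ∈ B_k`,
whose squared distance to `g↓` is exactly the hinge objective at `z`. The hinge objective at `ȳ` is
bounded by its squared distance to `g↓`, and that by the squared distance from `g↓` to `min g↓ z`.
-/

lemma topkSum_eq_iSup {ι : Type*} [Fintype ι] (k : ℕ) (x : ι → ℝ) :
    topkSum k x = ⨆ s : {s : Finset ι // s.card = k}, ∑ i ∈ s.1, x i := by
  refine congrArg sSup (Set.ext fun v => ?_)
  simp only [Set.mem_ofPred_eq, Set.mem_range, Subtype.exists, exists_prop]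
  exact exists_congr fun s => and_congr_right fun _ => eq_comm

lemma topkSum_monotone {ι : Type*} [Fintype ι] (k : ℕ) : Monotone (topkSum (ι := ι) k) := by
  intro x y hxy
  simp only [topkSum_eq_iSup]
  exact ciSup_mono (Set.finite_range _).bddAbove fun s => Finset.sum_le_sum fun i _ => hxy i

lemma isLowerSet_Bk (m k : ℕ) : IsLowerSet (Bk m k) :=
  fun _ _ hle hmem => (topkSum_monotone k hle).trans hmem

lemma sub_min_self_left (a b : ℝ) : a - min a b = max (a - b) 0 := by
  rcases le_total a b with h | h <;> simp [h]

lemma max_zero_sq_le_sq (a : ℝ) : max a 0 ^ 2 ≤ a ^ 2 := by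
  rcases le_total a 0 with h | h <;> simp [h, sq_nonneg]

theorem IsEProjOn.hinge_le_of_isLowerSet {m : ℕ} {S : Set (Fin m → ℝ)} {y p : Fin m → ℝ}
    (hp : IsEProjOn S y p) (hS : IsLowerSet S) {z : Fin m → ℝ} (hz : z ∈ S) :
    ∑ i, max (y i - p i) 0 ^ 2 ≤ ∑ i, max (y i - z i) 0 ^ 2 :=
  calc ∑ i, max (y i - p i) 0 ^ 2
      ≤ ∑ i, (y i - p i) ^ 2 := Finset.sum_le_sum fun i _ => max_zero_sq_le_sq _
    _ ≤ ∑ i, (y i - (y ⊓ z) i) ^ 2 := hp.2 _ (hS inf_le_right hz)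
    _ = ∑ i, max (y i - z i) 0 ^ 2 := by simp only [Pi.inf_apply, sub_min_self_left]

theorem proj_minimizes_hinge_obj_general
    (m k : ℕ)
    (g ybar : Fin m → ℝ)
    (hproj : IsEProjOn (Bk m k) (sortDesc g) ybar) :
    ybar ∈ Bk m k ∧
    ∀ z ∈ Bk m k,
      ∑ i, max (sortDesc g i - ybar i) 0 ^ 2 ≤ ∑ i, max (sortDesc g i - z i) 0 ^ 2 :=
  ⟨hproj.1, fun _ hz => hproj.hinge_le_of_isLowerSet (isLowerSet_Bk m k) hz⟩

/-- Lemma 3.1, first part: With `g↓` the nonincreasing rearrangement of `g` and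
`ȳ = proj_{B_k}(g↓)`, the point `ȳ` also minimizes `‖max(g↓ - y, 0)‖₂²` over `y ∈ B_k`,
i.e. `ȳ ∈ P`. -/
theorem proj_minimizes_hinge_obj
    (m k : ℕ) (hk1 : 1 ≤ k) (hkm : k ≤ m)
    (g ybar : Fin m → ℝ)
    (hproj : IsEProjOn (Bk m k) (sortDesc g) ybar) :
    ybar ∈ Bk m k ∧
    ∀ z ∈ Bk m k,
      ∑ i, max (sortDesc g i - ybar i) 0 ^ 2 ≤ ∑ i, max (sortDesc g i - z i) 0 ^ 2 :=
  proj_minimizes_hinge_obj_general m k g ybar hproj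
end

section
/- Let 1 ≤ k ≤ m and let ȳ ∈ B_k be sorted in nonincreasing order with index pair (k0, k1) associated with k and partition (α, β, γ). Then the tangent cone of B_k at ȳ satisfies: T_{B_k}(ȳ) = ℝ^m if T_k(ȳ) < 0, and T_{B_k}(ȳ) = { d ∈ ℝ^m : 1_α^⊤ d_α + T_{k−k0}(d_β) ≤ 0 } if T_k(ȳ) = 0, where T_{k−k0}(d_β) is the sum of the k−k0 largest entries of the subvector d_β. -/
open Filter Topology Matrix

/-- Tangent cone of a set `S` at `x`: the closure of the cone of feasible directions. -/
def tangentConeOf {E : Type*} [AddCommMonoid E] [SMul ℝ E] [TopologicalSpace E]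
    (S : Set E) (x : E) : Set E :=
  closure {d | ∃ t : ℝ, 0 < t ∧ x + t • d ∈ S}

set_option linter.unusedSectionVars false

namespace TopkAux

variable {ι : Type*} [Fintype ι] [DecidableEq ι]

lemma finite_set (k : ℕ) (x : ι → ℝ) :
    {v : ℝ | ∃ s : Finset ι, s.card = k ∧ v = ∑ i ∈ s, x i}.Finite := by
  apply (Set.finite_range (fun s : Finset ι => ∑ i ∈ s, x i)).subset
  rintro v ⟨s, -, rfl⟩; exact ⟨s, rfl⟩

lemma le_topkSum {k : ℕ} {x : ι → ℝ} {s : Finset ι} (hs : s.card = k) :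
    ∑ i ∈ s, x i ≤ topkSum k x :=
  le_csSup (finite_set k x).bddAbove ⟨s, hs, rfl⟩

lemma topkSum_le {k : ℕ} {x : ι → ℝ} {c : ℝ} (hne : ∃ s : Finset ι, s.card = k)
    (h : ∀ s : Finset ι, s.card = k → ∑ i ∈ s, x i ≤ c) : topkSum k x ≤ c := by
  obtain ⟨s0, hs0⟩ := hne
  exact csSup_le ⟨_, s0, hs0, rfl⟩ (by rintro v ⟨s, hs, rfl⟩; exact h s hs)

lemma topkSum_attained {k : ℕ} (x : ι → ℝ) (hne : ∃ s : Finset ι, s.card = k) :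
    ∃ s : Finset ι, s.card = k ∧ topkSum k x = ∑ i ∈ s, x i := by
  obtain ⟨s0, hs0⟩ := hne
  have hmem : sSup {v : ℝ | ∃ s : Finset ι, s.card = k ∧ v = ∑ i ∈ s, x i} ∈
      {v : ℝ | ∃ s : Finset ι, s.card = k ∧ v = ∑ i ∈ s, x i} :=
    Set.Nonempty.csSup_mem ⟨_, ⟨s0, hs0, rfl⟩⟩ (finite_set k x)
  obtain ⟨s, hs, h⟩ := hmem
  exact ⟨s, hs, h⟩

lemma swap_contra {k : ℕ} {x : ι → ℝ} {S : Finset ι} (hS : S.card = k)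
    (hmax : topkSum k x ≤ ∑ i ∈ S, x i) {a c : ι} (ha : a ∉ S) (hc : c ∈ S)
    (h : x c < x a) : False := by
  have hae : a ∉ S.erase c := fun h' => ha (Finset.mem_of_mem_erase h')
  have hS' : (insert a (S.erase c)).card = k := by
    rw [Finset.card_insert_of_notMem hae, Finset.card_erase_of_mem hc, hS]
    have : 1 ≤ k := by rw [← hS]; exact Finset.card_pos.mpr ⟨c, hc⟩
    omega
  have hle := le_topkSum (x := x) hS'
  rw [Finset.sum_insert hae, Finset.sum_erase_eq_sub hc] at hle
  linarith

lemma card_filter_lt (m n : ℕ) (h : n ≤ m) :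
    (Finset.univ.filter (fun i : Fin m => (i : ℕ) < n)).card = n := by
  have he : Finset.univ.filter (fun i : Fin m => (i : ℕ) < n)
      = (Finset.univ : Finset (Fin n)).map (Fin.castLEEmb h) := by
    ext i
    simp only [Finset.mem_filter, Finset.mem_univ, true_and, Finset.mem_map,
      Fin.castLEEmb, Function.Embedding.coeFn_mk]
    constructor
    · intro hi; exact ⟨⟨i, hi⟩, rfl⟩
    · rintro ⟨j, rfl⟩; simpa using j.2
  rw [he, Finset.card_map, Finset.card_univ, Fintype.card_fin]

end TopkAux

/-- For sorted `ȳ ∈ B_k` with index pair `(k0, k1)` and partition `(α, β, γ)`: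
`T_{B_k}(ȳ) = ℝ^m` if `T_k(ȳ) < 0`, and
`T_{B_k}(ȳ) = {d : 1_αᵀ d_α + T_{k-k0}(d_β) ≤ 0}` if `T_k(ȳ) = 0`. -/
theorem tangentCone_Bk
    (m k : ℕ) (hk1 : 1 ≤ k) (hkm : k ≤ m)
    (ybar : Fin m → ℝ) (hsorted : Antitone ybar) (hmem : ybar ∈ Bk m k)
    (k0 k1 : ℕ) (hk0 : k0 < k) (hkk1 : k ≤ k1) (hk1m : k1 ≤ m)
    (hpair : IsIndexPairOf k ybar k0 k1) :
    (topkSum k ybar < 0 → tangentConeOf (Bk m k) ybar = Set.univ) ∧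
    (topkSum k ybar = 0 →
      tangentConeOf (Bk m k) ybar =
        {d : Fin m → ℝ |
          (∑ i : Fin m, if (i : ℕ) < k0 then d i else 0) +
            topkSum (k - k0)
              (fun j : {i : Fin m // k0 ≤ (i : ℕ) ∧ (i : ℕ) < k1} => d j) ≤ 0}) := by
  obtain ⟨hp1, hp2, hp3, hp4, hp5, hp6⟩ := hpair
  have hS0 : ∃ S : Finset (Fin m), S.card = k :=
    ⟨Finset.univ.filter (fun i : Fin m => (i : ℕ) < k), TopkAux.card_filter_lt m k hkm⟩
  have hadd : ∀ (t : ℝ) (d : Fin m → ℝ) (S : Finset (Fin m)),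
      ∑ i ∈ S, (ybar + t • d) i = ∑ i ∈ S, ybar i + t * ∑ i ∈ S, d i := by
    intro t d S
    rw [Finset.mul_sum, ← Finset.sum_add_distrib]
    exact Finset.sum_congr rfl fun i _ => by simp [smul_eq_mul]
  constructor
  · -- case T_k(ybar) < 0
    intro hneg
    have hset : {d : Fin m → ℝ | ∃ t : ℝ, 0 < t ∧ ybar + t • d ∈ Bk m k} = Set.univ := by
      rw [Set.eq_univ_iff_forall]
      intro d
      set M : ℝ := ∑ i : Fin m, |d i| with hM
      have hM0 : 0 ≤ M := Finset.sum_nonneg fun i _ => abs_nonneg _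
      have hnum : 0 < -topkSum k ybar := by linarith
      refine ⟨(-topkSum k ybar) / (1 + M), div_pos hnum (by positivity), ?_⟩
      show topkSum k (ybar + _ • d) ≤ 0
      apply TopkAux.topkSum_le hS0
      intro S hcard
      rw [hadd]
      have h1 : ∑ i ∈ S, ybar i ≤ topkSum k ybar := TopkAux.le_topkSum hcard
      have h2 : ∑ i ∈ S, d i ≤ M := by
        calc ∑ i ∈ S, d i ≤ ∑ i ∈ S, |d i| := Finset.sum_le_sum fun i _ => le_abs_self _
        _ ≤ M := Finset.sum_le_sum_of_subset_of_nonneg (Finset.subset_univ S)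
            (fun i _ _ => abs_nonneg _)
      have hnum : 0 < -topkSum k ybar := by linarith [TopkAux.le_topkSum (x := ybar) hcard]
      have ht : (0:ℝ) < (-topkSum k ybar) / (1 + M) := div_pos hnum (by positivity)
      have h3 : (-topkSum k ybar) / (1 + M) * (1 + M) = -topkSum k ybar :=
        div_mul_cancel₀ _ (by positivity)
      nlinarith
    unfold tangentConeOf
    rw [hset, closure_univ]
  · -- case T_k(ybar) = 0
    intro hzero
    -- entry facts
    have hkm1 : k - 1 < m := by omega
    set θ : ℝ := ybar ⟨k - 1, hkm1⟩ with hθ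
    have heq : ∀ j : ℕ, k0 ≤ j → (hj : j < k1) → ybar ⟨j, by omega⟩ = θ := by
      intro j hj0 hj1
      have h := hp5 (j + 1) (by omega) (by omega)
      rw [entE, entE, dif_pos ⟨by omega, by omega⟩, dif_pos ⟨by omega, by omega⟩] at h
      simp only [Nat.add_sub_cancel] at h
      exact_mod_cast h
    have hαlt : ∀ a b : Fin m, (a : ℕ) < k0 → k0 ≤ (b : ℕ) → ybar b < ybar a := by
      intro a b ha hb
      have hk01 : 1 ≤ k0 := by omega
      have h4 : ybar ⟨k0, by omega⟩ < ybar ⟨k0 - 1, by omega⟩ := by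
        have h := hp4
        rw [entE, entE, dif_pos ⟨by omega, by omega⟩, dif_pos ⟨by omega, by omega⟩] at h
        simp only [Nat.add_sub_cancel] at h
        exact_mod_cast h
      have h1 : ybar b ≤ ybar ⟨k0, by omega⟩ := hsorted (by simp [Fin.le_def]; omega)
      have h2 : ybar ⟨k0 - 1, by omega⟩ ≤ ybar a := hsorted (by simp [Fin.le_def]; omega)
      linarith
    have hγlt : ∀ a b : Fin m, (a : ℕ) < k1 → k1 ≤ (b : ℕ) → ybar b < ybar a := by
      intro a b ha hb
      have hk1lt : k1 < m := by have := b.isLt; omega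
      have h4 : ybar ⟨k1, by omega⟩ < ybar ⟨k1 - 1, by omega⟩ := by
        have h := hp6
        rw [entE, entE, dif_pos ⟨by omega, by omega⟩, dif_pos ⟨by omega, by omega⟩] at h
        simp only [Nat.add_sub_cancel] at h
        exact_mod_cast h
      have h1 : ybar b ≤ ybar ⟨k1, by omega⟩ := hsorted (by simp [Fin.le_def]; omega)
      have h2 : ybar ⟨k1 - 1, by omega⟩ ≤ ybar a := hsorted (by simp [Fin.le_def]; omega)
      linarith
    -- structure of maximizing sets
    set A : Finset (Fin m) := Finset.univ.filter (fun i : Fin m => (i : ℕ) < k0) with hA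
    have hcardA : A.card = k0 := TopkAux.card_filter_lt m k0 (by omega)
    have hstruct : ∀ S : Finset (Fin m), S.card = k → topkSum k ybar ≤ ∑ i ∈ S, ybar i →
        (∀ a : Fin m, (a : ℕ) < k0 → a ∈ S) ∧ (∀ c ∈ S, (c : ℕ) < k1) := by
      intro S hcard hmax
      constructor
      · intro a ha
        by_contra haS
        have hc : ∃ c ∈ S, ¬ (c : ℕ) < k0 := by
          by_contra hall
          push_neg at hall
          have hsub : S ⊆ A.erase a := by
            intro i hi
            exact Finset.mem_erase.mpr ⟨fun h => haS (h ▸ hi),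
              Finset.mem_filter.mpr ⟨Finset.mem_univ _, hall i hi⟩⟩
          have haA : a ∈ A := by rw [hA]; exact Finset.mem_filter.mpr ⟨Finset.mem_univ _, ha⟩
          have hle := Finset.card_le_card hsub
          rw [hcard, Finset.card_erase_of_mem haA, hcardA] at hle
          omega
        obtain ⟨c, hcS, hck0⟩ := hc
        exact (TopkAux.swap_contra hcard hmax haS hcS (hαlt a c ha (by omega))).elim
      · intro c hcS
        by_contra hck1
        push_neg at hck1
        have ha : ∃ a : Fin m, (a : ℕ) < k1 ∧ a ∉ S := by
          by_contra hall
          push_neg at hall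
          have hsub : insert c (Finset.univ.filter (fun i : Fin m => (i : ℕ) < k1)) ⊆ S := by
            intro i hi
            rcases Finset.mem_insert.mp hi with h | h
            · exact h ▸ hcS
            · exact hall i (Finset.mem_filter.mp h).2
          have hle := Finset.card_le_card hsub
          rw [Finset.card_insert_of_notMem (by simp; omega),
            TopkAux.card_filter_lt m k1 hk1m, hcard] at hle
          omega
        obtain ⟨a, hak1, haS⟩ := ha
        exact (TopkAux.swap_contra hcard hmax haS hcS (hγlt a c hak1 hck1)).elim
    -- decomposition of sums over maximizing sets
    have hdecomp : ∀ S : Finset (Fin m), S.card = k → (∀ a : Fin m, (a : ℕ) < k0 → a ∈ S) →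
        (S.filter (fun i : Fin m => ¬ (i : ℕ) < k0)).card = k - k0 ∧
        ∀ f : Fin m → ℝ, ∑ i ∈ S, f i
          = ∑ i ∈ A, f i + ∑ i ∈ S.filter (fun i : Fin m => ¬ (i : ℕ) < k0), f i := by
      intro S hcard hAsub
      have h1 : S.filter (fun i : Fin m => (i : ℕ) < k0) = A := by
        ext i
        simp only [Finset.mem_filter, Finset.mem_univ, true_and, hA]
        exact ⟨And.right, fun h => ⟨hAsub i h, h⟩⟩
      constructor
      · have := Finset.card_filter_add_card_filter_not
          (s := S) (p := fun i : Fin m => (i : ℕ) < k0)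
        rw [h1, hcardA, hcard] at this
        omega
      · intro f
        rw [← h1, Finset.sum_filter_add_sum_filter_not]
    -- the common value identity
    have hc0 : ∑ i ∈ A, ybar i + ((k : ℝ) - (k0 : ℝ)) * θ = 0 := by
      obtain ⟨S, hScard, hSsum⟩ := TopkAux.topkSum_attained ybar hS0
      obtain ⟨hA', hC'⟩ := hstruct S hScard (le_of_eq hSsum)
      obtain ⟨hcardR, hsumR⟩ := hdecomp S hScard hA'
      have hRval : ∀ i ∈ S.filter (fun i : Fin m => ¬ (i : ℕ) < k0), ybar i = θ := by
        intro i hi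
        obtain ⟨hiS, hik0⟩ := Finset.mem_filter.mp hi
        have := heq i (by omega) (hC' i hiS)
        simpa using this
      have : ∑ i ∈ S.filter (fun i : Fin m => ¬ (i : ℕ) < k0), ybar i = ((k : ℝ) - (k0 : ℝ)) * θ := by
        rw [Finset.sum_congr rfl hRval, Finset.sum_const, hcardR, nsmul_eq_mul,
          Nat.cast_sub (by omega)]
      have hsum := hsumR ybar
      rw [this] at hsum
      rw [← hsum, ← hzero, hSsum]
    -- existence of a (k-k0)-subset of β
    have hBex : ∃ B : Finset {i : Fin m // k0 ≤ (i : ℕ) ∧ (i : ℕ) < k1}, B.card = k - k0 := by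
      have hgm : ∀ j : Fin (k - k0), k0 + (j : ℕ) < m := fun j => by have := j.isLt; omega
      have hg1 : ∀ j : Fin (k - k0), k0 + (j : ℕ) < k1 := fun j => by have := j.isLt; omega
      have hinj : Function.Injective (fun j : Fin (k - k0) =>
          (⟨⟨k0 + (j : ℕ), hgm j⟩,
            ⟨Nat.le_add_right _ _, hg1 j⟩⟩ :
            {i : Fin m // k0 ≤ (i : ℕ) ∧ (i : ℕ) < k1})) := by
        intro a b hab
        simp only [Subtype.mk.injEq, Fin.mk.injEq] at hab
        exact Fin.ext (by omega)
      exact ⟨Finset.univ.image _, by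
        rw [Finset.card_image_of_injective _ hinj, Finset.card_univ, Fintype.card_fin]⟩
    set D : Set (Fin m → ℝ) := {d | ∃ t : ℝ, 0 < t ∧ ybar + t • d ∈ Bk m k} with hD
    set T : Set (Fin m → ℝ) := {d : Fin m → ℝ |
      (∑ i : Fin m, if (i : ℕ) < k0 then d i else 0) +
        topkSum (k - k0)
          (fun j : {i : Fin m // k0 ≤ (i : ℕ) ∧ (i : ℕ) < k1} => d j) ≤ 0} with hT
    have hsumA : ∀ d : Fin m → ℝ,
        (∑ i : Fin m, if (i : ℕ) < k0 then d i else 0) = ∑ i ∈ A, d i := by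
      intro d; rw [hA, Finset.sum_filter]
    -- D ⊆ T
    have hDT : D ⊆ T := by
      rintro d ⟨t, ht, hmem'⟩
      obtain ⟨B, hBcard, hBsum⟩ :=
        TopkAux.topkSum_attained (fun j : {i : Fin m // k0 ≤ (i : ℕ) ∧ (i : ℕ) < k1} => d j) hBex
      set M : Finset (Fin m) := B.map (Function.Embedding.subtype _) with hMdef
      have hMmem : ∀ i ∈ M, k0 ≤ (i : ℕ) ∧ (i : ℕ) < k1 := by
        intro i hi
        obtain ⟨j, hj, rfl⟩ := Finset.mem_map.mp hi
        exact j.2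
      have hdisj : Disjoint A M := by
        rw [Finset.disjoint_left]
        intro i hiA hiM
        have h1 := (Finset.mem_filter.mp hiA).2
        have h2 := (hMmem i hiM).1
        omega
      set S : Finset (Fin m) := A ∪ M with hSdef
      have hScard : S.card = k := by
        rw [hSdef, Finset.card_union_of_disjoint hdisj, hcardA, Finset.card_map, hBcard]
        omega
      have hsumM : ∀ f : Fin m → ℝ, ∑ i ∈ M, f i = ∑ j ∈ B, f j := by
        intro f; rw [hMdef, Finset.sum_map]; rfl
      have hSy : ∑ i ∈ S, ybar i = 0 := by
        rw [hSdef, Finset.sum_union hdisj, hsumM]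
        have : ∑ j ∈ B, ybar j = ((k : ℝ) - (k0 : ℝ)) * θ := by
          rw [Finset.sum_congr rfl (fun j _ => by
            have := heq (j : Fin m) j.2.1 j.2.2
            simpa using this), Finset.sum_const, hBcard, nsmul_eq_mul,
            Nat.cast_sub (by omega)]
        rw [this]; exact hc0
      have hle : ∑ i ∈ S, (ybar + t • d) i ≤ 0 :=
        le_trans (TopkAux.le_topkSum hScard) hmem'
      rw [hadd, hSy, zero_add] at hle
      have hSd : ∑ i ∈ S, d i =
          (∑ i : Fin m, if (i : ℕ) < k0 then d i else 0) +
            topkSum (k - k0) (fun j : {i : Fin m // k0 ≤ (i : ℕ) ∧ (i : ℕ) < k1} => d j) := by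
        rw [hSdef, Finset.sum_union hdisj, hsumM, hsumA, hBsum]
      rw [hSd] at hle
      show _ ≤ (0:ℝ)
      nlinarith
    -- T ⊆ D
    have hTD : T ⊆ D := by
      intro d hd
      have hd' : (∑ i ∈ A, d i) +
          topkSum (k - k0) (fun j : {i : Fin m // k0 ≤ (i : ℕ) ∧ (i : ℕ) < k1} => d j) ≤ 0 := by
        rw [← hsumA]; exact hd
      set tS : Finset (Fin m) → ℝ := fun S =>
        if ∑ i ∈ S, ybar i < 0 then (-(∑ i ∈ S, ybar i)) / (1 + |∑ i ∈ S, d i|) else 1 with htS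
      have htSpos : ∀ S : Finset (Fin m), 0 < tS S := by
        intro S
        simp only [htS]
        split_ifs with h
        · have : 0 < -(∑ i ∈ S, ybar i) := by linarith
          positivity
        · norm_num
      have hune : (Finset.univ : Finset (Finset (Fin m))).Nonempty := ⟨∅, Finset.mem_univ _⟩
      set t : ℝ := Finset.univ.inf' hune tS with htdef
      have ht : 0 < t := (Finset.lt_inf'_iff hune).mpr fun S _ => htSpos S
      refine ⟨t, ht, ?_⟩
      show topkSum k (ybar + t • d) ≤ 0
      apply TopkAux.topkSum_le hS0
      intro S hcard
      rw [hadd]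
      have hSy : ∑ i ∈ S, ybar i ≤ 0 := le_trans (TopkAux.le_topkSum hcard) (le_of_eq hzero)
      by_cases hcase : ∑ i ∈ S, ybar i < 0
      · have habs : 0 < 1 + |∑ i ∈ S, d i| := by positivity
        have hts : t ≤ (-(∑ i ∈ S, ybar i)) / (1 + |∑ i ∈ S, d i|) := by
          have h := Finset.inf'_le tS (Finset.mem_univ S)
          simp only [htS] at h
          rw [if_pos hcase] at h
          exact h
        have h1 : t * (1 + |∑ i ∈ S, d i|) ≤ -(∑ i ∈ S, ybar i) := by
          have := mul_le_mul_of_nonneg_right hts habs.le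
          rwa [div_mul_cancel₀ _ habs.ne'] at this
        have h2 : t * ∑ i ∈ S, d i ≤ t * |∑ i ∈ S, d i| :=
          mul_le_mul_of_nonneg_left (le_abs_self _) ht.le
        nlinarith
      · have hSy0 : ∑ i ∈ S, ybar i = 0 := le_antisymm hSy (not_lt.mp hcase)
        obtain ⟨hA', hC'⟩ := hstruct S hcard (by rw [hzero, hSy0])
        obtain ⟨hcardR, hsumR⟩ := hdecomp S hcard hA'
        -- bound ∑_{S\A} d by topkSum over β
        set p : Fin m → Prop := fun i => k0 ≤ (i : ℕ) ∧ (i : ℕ) < k1 with hp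
        have hfeq : S.filter p = S.filter (fun i : Fin m => ¬ (i : ℕ) < k0) := by
          ext i
          simp only [Finset.mem_filter, hp]
          constructor
          · rintro ⟨hi, h1, h2⟩; exact ⟨hi, by omega⟩
          · rintro ⟨hi, h1⟩; exact ⟨hi, by omega, hC' i hi⟩
        have hBsub : (S.subtype p).card = k - k0 := by
          rw [Finset.card_subtype, hfeq, hcardR]
        have hRle : ∑ i ∈ S.filter (fun i : Fin m => ¬ (i : ℕ) < k0), d i ≤
            topkSum (k - k0) (fun j : {i : Fin m // k0 ≤ (i : ℕ) ∧ (i : ℕ) < k1} => d j) := by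
          have := TopkAux.le_topkSum
            (x := fun j : {i : Fin m // k0 ≤ (i : ℕ) ∧ (i : ℕ) < k1} => d j) hBsub
          rwa [Finset.sum_subtype_eq_sum_filter, hfeq] at this
        have hSd : ∑ i ∈ S, d i ≤ 0 := by
          rw [hsumR d]
          linarith
        nlinarith
    -- closedness of T
    have hTclosed : IsClosed T := by
      have hTeq : T = ⋂ (B : Finset {i : Fin m // k0 ≤ (i : ℕ) ∧ (i : ℕ) < k1})
          (_ : B.card = k - k0),
          {d : Fin m → ℝ | (∑ i : Fin m, if (i : ℕ) < k0 then d i else 0)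
            + ∑ j ∈ B, d j ≤ 0} := by
        ext d
        simp only [hT, Set.mem_setOf_eq, Set.mem_iInter]
        constructor
        · intro h B hB
          have := TopkAux.le_topkSum
            (x := fun j : {i : Fin m // k0 ≤ (i : ℕ) ∧ (i : ℕ) < k1} => d j) hB
          linarith
        · intro h
          have : topkSum (k - k0) (fun j : {i : Fin m // k0 ≤ (i : ℕ) ∧ (i : ℕ) < k1} => d j)
              ≤ -(∑ i : Fin m, if (i : ℕ) < k0 then d i else 0) :=
            TopkAux.topkSum_le hBex (fun B hB => by linarith [h B hB])
          linarith
      rw [hTeq]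
      refine isClosed_iInter fun B => isClosed_iInter fun _ => ?_
      apply isClosed_le _ continuous_const
      apply Continuous.add
      · apply continuous_finset_sum
        intro i _
        by_cases h : (i : ℕ) < k0
        · simpa [h] using continuous_apply i
        · simp only [h, if_false]
          exact continuous_const
      · exact continuous_finset_sum _ fun j _ => continuous_apply (j : Fin m)
    -- conclude
    show closure D = T
    exact subset_antisymm (closure_minimal hDT hTclosed) (hTD.trans subset_closure)
end

section
/- Let 1 ≤ k ≤ m, let y ∈ ℝ^m be sorted in nonincreasing order with T_k(y) > 0, let ȳ := proj_{B_k}(y) have index pair (k̄0, k̄1) associated with k and partition (ᾱ, β̄, γ̄), and let (ȳ, μ̄, λ̄, θ̄) satisfy the projection KKT conditions. Then the critical cone C_{B_k}(y) := T_{B_k}(ȳ) ∩ (ȳ − y)^⊥ satisfies C_{B_k}(y) = { d ∈ ℝ^m : T_{k−k̄0}(d_β̄) ≤ μ̄_β̄^⊤ d_β̄ and 1_ᾱ^⊤ d_ᾱ + μ̄_β̄^⊤ d_β̄ = 0 }, where T_{k−k̄0}(d_β̄) is the sum of the k−k̄0 largest entries of the subvector d_β̄. -/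
open Filter Topology Matrix

section aux
variable {ι : Type*} [Fintype ι]

lemma topkSum_set_finite (k : ℕ) (x : ι → ℝ) :
    {v : ℝ | ∃ s : Finset ι, s.card = k ∧ v = ∑ i ∈ s, x i}.Finite := by
  have h : {v : ℝ | ∃ s : Finset ι, s.card = k ∧ v = ∑ i ∈ s, x i}
      ⊆ (fun s : Finset ι => ∑ i ∈ s, x i) '' Set.univ := by
    rintro v ⟨s, _, rfl⟩; exact ⟨s, trivial, rfl⟩
  exact (Set.finite_univ.image _).subset h

lemma topkSum_set_nonempty (k : ℕ) (hk : k ≤ Fintype.card ι) (x : ι → ℝ) :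
    {v : ℝ | ∃ s : Finset ι, s.card = k ∧ v = ∑ i ∈ s, x i}.Nonempty := by
  obtain ⟨t, _, ht⟩ := Finset.exists_subset_card_eq (s := (Finset.univ : Finset ι)) (by simpa using hk)
  exact ⟨_, t, ht, rfl⟩

lemma le_topkSum (k : ℕ) (x : ι → ℝ) (s : Finset ι) (hs : s.card = k) :
    ∑ i ∈ s, x i ≤ topkSum k x :=
  le_csSup (topkSum_set_finite k x).bddAbove ⟨s, hs, rfl⟩

lemma topkSum_le_iff (k : ℕ) (hk : k ≤ Fintype.card ι) (x : ι → ℝ) (c : ℝ) :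
    topkSum k x ≤ c ↔ ∀ s : Finset ι, s.card = k → ∑ i ∈ s, x i ≤ c := by
  rw [topkSum, csSup_le_iff (topkSum_set_finite k x).bddAbove (topkSum_set_nonempty k hk x)]
  constructor
  · intro h s hs; exact h _ ⟨s, hs, rfl⟩
  · rintro h v ⟨s, hs, rfl⟩; exact h s hs

end aux

lemma card_filter_lt_fin (m k0 : ℕ) (h : k0 ≤ m) :
    (Finset.univ.filter (fun i : Fin m => (i:ℕ) < k0)).card = k0 := by
  have e : (Finset.univ.filter (fun i : Fin m => (i:ℕ) < k0))
      = Finset.attachFin (Finset.range k0) (fun x hx => by simp at hx; omega) := by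
    ext i; simp [Finset.mem_attachFin]
  rw [e, Finset.card_attachFin, Finset.card_range]


/-- For sorted `y` with `T_k(y) > 0`, `ȳ = proj_{B_k}(y)` with index pair
`(k̄0, k̄1)` and KKT multipliers, the critical cone
`C_{B_k}(y) = T_{B_k}(ȳ) ∩ (ȳ - y)^⊥` equals
`{d : T_{k-k̄0}(d_β̄) ≤ μ̄_β̄ᵀ d_β̄ and 1_ᾱᵀ d_ᾱ + μ̄_β̄ᵀ d_β̄ = 0}`. -/
theorem criticalCone_Bk
    (m k : ℕ) (hk1 : 1 ≤ k) (hkm : k ≤ m)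
    (y ybar : Fin m → ℝ) (hsorted : Antitone y) (hpos : 0 < topkSum k y)
    (hproj : IsEProjOn (Bk m k) y ybar)
    (μ : Fin m → ℝ) (lam θ : ℝ) (k0 k1 : ℕ)
    (hkkt : ProjKKT k y ybar μ lam θ k0 k1) :
    tangentConeOf (Bk m k) ybar ∩ {d : Fin m → ℝ | ∑ i, (ybar i - y i) * d i = 0} =
      {d : Fin m → ℝ |
        topkSum (k - k0) (fun j : {i : Fin m // k0 ≤ (i : ℕ) ∧ (i : ℕ) < k1} => d j) ≤
            (∑ i : Fin m, if k0 ≤ (i : ℕ) ∧ (i : ℕ) < k1 then μ i * d i else 0) ∧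
        (∑ i : Fin m, if (i : ℕ) < k0 then d i else 0) +
            (∑ i : Fin m, if k0 ≤ (i : ℕ) ∧ (i : ℕ) < k1 then μ i * d i else 0) = 0} := by
  obtain ⟨hip, hα, hβ, hμsum, hγ, heq0, hlam, hθ1, hθ2⟩ := hkkt
  obtain ⟨hk0k, hkk1, hk1m, _, _, _⟩ := hip
  have hk0m : k0 ≤ m := by omega
  set Pβ : Fin m → Prop := fun i => k0 ≤ (i:ℕ) ∧ (i:ℕ) < k1 with hPβ
  set αf : Finset (Fin m) := Finset.univ.filter (fun i : Fin m => (i:ℕ) < k0) with hαf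
  have hcardαf : αf.card = k0 := card_filter_lt_fin m k0 hk0m
  have hmemαf : ∀ i : Fin m, i ∈ αf ↔ (i:ℕ) < k0 := by
    intro i; simp [hαf]
  -- card of subtype β
  have hcardβ : k - k0 ≤ Fintype.card {i : Fin m // Pβ i} := by
    have hinj : Function.Injective (fun j : Fin (k - k0) =>
        (⟨⟨k0 + (j:ℕ), by omega⟩, ⟨by simp, by simp; omega⟩⟩ : {i : Fin m // Pβ i})) := by
      intro a b hab
      have := congrArg (fun x : {i : Fin m // Pβ i} => ((x : Fin m) : ℕ)) hab
      simp at this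
      exact Fin.ext this
    simpa using Fintype.card_le_of_injective _ hinj
  -- values of ybar
  have hybβ : ∀ i : Fin m, k0 ≤ (i:ℕ) → (i:ℕ) < k1 → ybar i = θ := fun i h1 h2 => (hβ i h1 h2).2.1
  have hybα : ∀ i : Fin m, (i:ℕ) < k0 → θ < ybar i := by
    intro i hi
    have hk01 : 1 ≤ k0 := by omega
    have hE : entE ybar k0 = ((ybar ⟨k0 - 1, by omega⟩ : ℝ) : EReal) := by
      rw [entE, dif_pos ⟨hk01, hk0m⟩]
    rw [hE, EReal.coe_lt_coe_iff] at hθ1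
    have h1 : ybar i = y i - lam := (hα i hi).1
    have h2 : ybar ⟨k0 - 1, by omega⟩ = y ⟨k0 - 1, by omega⟩ - lam := (hα _ (by simp; omega)).1
    have h3 : y ⟨k0 - 1, by omega⟩ ≤ y i := hsorted (by simp [Fin.le_def]; omega)
    rw [h1]; rw [h2] at hθ1; linarith
  have hybγ : ∀ i : Fin m, k1 ≤ (i:ℕ) → ybar i < θ := by
    intro i hi
    have hk1m' : k1 < m := lt_of_le_of_lt hi i.isLt
    have hE : entE ybar (k1 + 1) = ((ybar ⟨k1, hk1m'⟩ : ℝ) : EReal) := by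
      rw [entE, dif_pos ⟨by omega, by omega⟩]
      norm_num
    rw [hE, EReal.coe_lt_coe_iff] at hθ2
    have h1 : ybar i = y i := (hγ i hi).1
    have h2 : ybar ⟨k1, hk1m'⟩ = y ⟨k1, hk1m'⟩ := (hγ _ (by simp)).1
    have h3 : y i ≤ y ⟨k1, hk1m'⟩ := hsorted (by simp [Fin.le_def]; omega)
    rw [h1]; rw [h2] at hθ2; linarith
  -- sum of ybar over αf
  have hsumαy : ∑ i ∈ αf, y i = ∑ i : Fin m, (if (i:ℕ) < k0 then y i else 0) := by
    rw [hαf, Finset.sum_filter]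
  have hsumαybar : ∑ i ∈ αf, ybar i = -(((k:ℝ) - (k0:ℝ)) * θ) := by
    have h1 : ∑ i ∈ αf, ybar i = ∑ i ∈ αf, (y i - lam) := by
      apply Finset.sum_congr rfl
      intro i hi; exact (hα i ((hmemαf i).1 hi)).1
    rw [h1, Finset.sum_sub_distrib, Finset.sum_const, hcardαf, nsmul_eq_mul]
    rw [hsumαy] at *
    linarith [heq0]
  -- key: sums of ybar over "active" sets built from αf and a β-chunk
  have emb := Function.Embedding.subtype Pβ
  have hsum0 : ∀ s : Finset {i : Fin m // Pβ i}, s.card = k - k0 →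
      ∑ i ∈ αf ∪ s.map (Function.Embedding.subtype Pβ), ybar i = 0 := by
    intro s hs
    have hdisj : Disjoint αf (s.map (Function.Embedding.subtype Pβ)) := by
      rw [Finset.disjoint_left]
      intro i hi hi2
      rw [Finset.mem_map] at hi2
      obtain ⟨j, _, hj⟩ := hi2
      have := j.2.1
      rw [hmemαf] at hi
      simp [Function.Embedding.coe_subtype] at hj
      omega
    rw [Finset.sum_union hdisj, Finset.sum_map]
    have h2 : ∑ j ∈ s, ybar ((Function.Embedding.subtype Pβ) j) = ((k:ℝ) - (k0:ℝ)) * θ := by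
      have : ∀ j ∈ s, ybar ((Function.Embedding.subtype Pβ) j) = θ := by
        intro j _
        simp only [Function.Embedding.coe_subtype]
        exact hybβ j j.2.1 j.2.2
      rw [Finset.sum_congr rfl this, Finset.sum_const, hs, nsmul_eq_mul]
      congr 1
      push_cast [Nat.cast_sub (le_of_lt (by omega : k0 < k))]
      ring
    rw [h2, hsumαybar]; ring
  have hcardS : ∀ s : Finset {i : Fin m // Pβ i}, s.card = k - k0 →
      (αf ∪ s.map (Function.Embedding.subtype Pβ)).card = k := by
    intro s hs
    have hdisj : Disjoint αf (s.map (Function.Embedding.subtype Pβ)) := by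
      rw [Finset.disjoint_left]
      intro i hi hi2
      rw [Finset.mem_map] at hi2
      obtain ⟨j, _, hj⟩ := hi2
      have := j.2.1
      rw [hmemαf] at hi
      simp [Function.Embedding.coe_subtype] at hj
      omega
    rw [Finset.card_union_of_disjoint hdisj, Finset.card_map, hcardαf, hs]
    omega
  -- orthogonality identity
  have horthid : ∀ d : Fin m → ℝ, ∑ i, (ybar i - y i) * d i
      = -lam * ((∑ i : Fin m, if (i:ℕ) < k0 then d i else 0)
        + (∑ i : Fin m, if k0 ≤ (i:ℕ) ∧ (i:ℕ) < k1 then μ i * d i else 0)) := by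
    intro d
    rw [← Finset.sum_add_distrib, Finset.mul_sum]
    apply Finset.sum_congr rfl
    intro i _
    rcases lt_or_ge (i:ℕ) k0 with h | h
    · rw [if_pos h, if_neg (by omega)]
      rw [(hα i h).1]; ring
    · rcases lt_or_ge (i:ℕ) k1 with h2 | h2
      · rw [if_neg (by omega), if_pos ⟨h, h2⟩]
        rw [(hβ i h h2).1]; ring
      · rw [if_neg (by omega), if_neg (by omega)]
        rw [(hγ i h2).1]; ring
  have hybarBk : topkSum k ybar ≤ 0 := hproj.1

  have hyS : ∀ S : Finset (Fin m), S.card = k → ∑ i ∈ S, ybar i ≤ 0 :=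
    fun S hS => le_trans (le_topkSum k ybar S hS) hybarBk
  -- active set characterization
  have hactive : ∀ S : Finset (Fin m), S.card = k → ∑ i ∈ S, ybar i = 0 →
      αf ⊆ S ∧ ∀ i ∈ S, (i:ℕ) < k1 := by
    intro S hS hS0
    set f : Fin m → ℝ := fun i => ybar i - θ with hf
    have hsplit : ∑ i ∈ S, f i
        = ∑ i ∈ S.filter (fun i : Fin m => (i:ℕ) < k0), f i
          + ∑ i ∈ S.filter (fun i : Fin m => k1 ≤ (i:ℕ)), f i := by
      rw [← Finset.sum_filter_add_sum_filter_not S (fun i : Fin m => (i:ℕ) < k0) f]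
      congr 1
      rw [← Finset.sum_filter_add_sum_filter_not
        (S.filter (fun i : Fin m => ¬ (i:ℕ) < k0)) (fun i : Fin m => (i:ℕ) < k1) f]
      have hz : ∑ i ∈ (S.filter (fun i : Fin m => ¬ (i:ℕ) < k0)).filter (fun i : Fin m => (i:ℕ) < k1), f i = 0 := by
        apply Finset.sum_eq_zero
        intro i hi
        rw [Finset.filter_filter, Finset.mem_filter] at hi
        simp only [hf]
        rw [hybβ i (by omega) hi.2.2]
        ring
      have he : (S.filter (fun i : Fin m => ¬ (i:ℕ) < k0)).filter (fun i : Fin m => ¬ (i:ℕ) < k1)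
          = S.filter (fun i : Fin m => k1 ≤ (i:ℕ)) := by
        rw [Finset.filter_filter]
        apply Finset.filter_congr
        intro i _
        constructor
        · rintro ⟨_, h2⟩; omega
        · intro h; exact ⟨by omega, by omega⟩
      rw [hz, he, zero_add]
    have hT1sub : S.filter (fun i : Fin m => (i:ℕ) < k0) ⊆ αf := by
      intro i hi; rw [hmemαf]; exact (Finset.mem_filter.mp hi).2
    have hT1le : ∑ i ∈ S.filter (fun i : Fin m => (i:ℕ) < k0), f i ≤ ∑ i ∈ αf, f i := by
      apply Finset.sum_le_sum_of_subset_of_nonneg hT1sub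
      intro j hj _
      have := hybα j ((hmemαf j).mp hj)
      simp only [hf]; linarith
    have hT3 : ∀ i ∈ S.filter (fun i : Fin m => k1 ≤ (i:ℕ)), f i < 0 := by
      intro i hi
      have := hybγ i (Finset.mem_filter.mp hi).2
      simp only [hf]; linarith
    have hT3le : ∑ i ∈ S.filter (fun i : Fin m => k1 ≤ (i:ℕ)), f i ≤ 0 :=
      Finset.sum_nonpos fun i hi => (hT3 i hi).le
    have hsumf : ∑ i ∈ S, f i = -((k:ℝ) * θ) := by
      simp only [hf]
      rw [Finset.sum_sub_distrib, hS0, Finset.sum_const, hS, nsmul_eq_mul]; ring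
    have hαff : ∑ i ∈ αf, f i = -((k:ℝ) * θ) := by
      simp only [hf]
      rw [Finset.sum_sub_distrib, hsumαybar, Finset.sum_const, hcardαf, nsmul_eq_mul]; ring
    have hT1eq : ∑ i ∈ S.filter (fun i : Fin m => (i:ℕ) < k0), f i = ∑ i ∈ αf, f i := by linarith
    have hT3eq : ∑ i ∈ S.filter (fun i : Fin m => k1 ≤ (i:ℕ)), f i = 0 := by linarith
    constructor
    · intro i hi
      by_contra hiS
      have hiT1 : i ∉ S.filter (fun i : Fin m => (i:ℕ) < k0) := fun h => hiS (Finset.mem_filter.mp h).1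
      have hlt : ∑ j ∈ S.filter (fun i : Fin m => (i:ℕ) < k0), f j < ∑ j ∈ αf, f j :=
        Finset.sum_lt_sum_of_subset hT1sub hi hiT1
          (by have := hybα i ((hmemαf i).mp hi); simp only [hf]; linarith)
          (fun j hj _ => by have := hybα j ((hmemαf j).mp hj); simp only [hf]; linarith)
      linarith
    · intro i hiS
      by_contra hik1
      have hne : (S.filter (fun i : Fin m => k1 ≤ (i:ℕ))).Nonempty :=
        ⟨i, Finset.mem_filter.mpr ⟨hiS, by omega⟩⟩
      have := Finset.sum_neg hT3 hne
      linarith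
  ext d
  simp only [Set.mem_inter_iff, Set.mem_setOf_eq]
  set A := ∑ i : Fin m, (if (i:ℕ) < k0 then d i else 0) with hA
  set B := ∑ i : Fin m, (if k0 ≤ (i:ℕ) ∧ (i:ℕ) < k1 then μ i * d i else 0) with hB
  have hAeq : A = ∑ i ∈ αf, d i := by rw [hA, hαf, Finset.sum_filter]
  constructor
  · rintro ⟨htan, horth⟩
    have hAB : A + B = 0 := by
      have h := horthid d
      rw [horth] at h
      have h2 : lam * (A + B) = 0 := by rw [hA, hB]; linarith
      rcases mul_eq_zero.mp h2 with h3 | h3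
      · exact absurd h3 (ne_of_gt hlam)
      · exact h3
    refine ⟨?_, hAB⟩
    rw [topkSum_le_iff _ hcardβ]
    intro s hs
    have key : (∑ i ∈ αf, d i) + ∑ j ∈ s, d (j : Fin m) ≤ 0 := by
      have hcl : IsClosed {e : Fin m → ℝ | (∑ i ∈ αf, e i) + ∑ j ∈ s, e (j : Fin m) ≤ 0} := by
        have hcont : Continuous
            (fun e : Fin m → ℝ => (∑ i ∈ αf, e i) + ∑ j ∈ s, e (j : Fin m)) := by
          apply Continuous.add <;>
            exact continuous_finset_sum _ (fun i _ => continuous_apply _)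
        exact isClosed_le hcont continuous_const
      have hsub : {e : Fin m → ℝ | ∃ t : ℝ, 0 < t ∧ ybar + t • e ∈ Bk m k}
          ⊆ {e : Fin m → ℝ | (∑ i ∈ αf, e i) + ∑ j ∈ s, e (j : Fin m) ≤ 0} := by
        rintro e ⟨t, ht, hmem⟩
        have hdisj : Disjoint αf (s.map (Function.Embedding.subtype Pβ)) := by
          rw [Finset.disjoint_left]
          intro i hi hi2
          rw [Finset.mem_map] at hi2
          obtain ⟨j, _, hj⟩ := hi2
          have := j.2.1
          rw [hmemαf] at hi
          simp [Function.Embedding.coe_subtype] at hj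
          omega
        have h1 : ∑ i ∈ αf ∪ s.map (Function.Embedding.subtype Pβ), (ybar i + t * e i) ≤ 0 := by
          have hmem' : topkSum k (ybar + t • e) ≤ 0 := hmem
          calc ∑ i ∈ αf ∪ s.map (Function.Embedding.subtype Pβ), (ybar i + t * e i)
              = ∑ i ∈ αf ∪ s.map (Function.Embedding.subtype Pβ), (ybar + t • e) i := by
                apply Finset.sum_congr rfl; intro i _; simp
            _ ≤ topkSum k (ybar + t • e) := le_topkSum k (ybar + t • e) _ (hcardS s hs)
            _ ≤ 0 := hmem'
        have h2 := hsum0 s hs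
        rw [Finset.sum_add_distrib, ← Finset.mul_sum, h2, zero_add] at h1
        have h3 : ∑ i ∈ αf ∪ s.map (Function.Embedding.subtype Pβ), e i
            = (∑ i ∈ αf, e i) + ∑ j ∈ s, e (j : Fin m) := by
          rw [Finset.sum_union hdisj, Finset.sum_map]
          simp [Function.Embedding.coe_subtype]
        rw [h3] at h1
        have : (∑ i ∈ αf, e i) + ∑ j ∈ s, e (j : Fin m) ≤ 0 := by nlinarith
        exact this
      have htan' : d ∈ closure {e : Fin m → ℝ | ∃ t : ℝ, 0 < t ∧ ybar + t • e ∈ Bk m k} := htan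
      exact closure_minimal hsub hcl htan'
    have : ∑ j ∈ s, d (j : Fin m) ≤ B := by linarith [hAeq]
    exact this
  · rintro ⟨htop, hAB⟩
    have horth : ∑ i, (ybar i - y i) * d i = 0 := by
      rw [horthid d, ← hA, ← hB, hAB, mul_zero]
    refine ⟨?_, horth⟩
    have hactive' : ∀ S : Finset (Fin m), S.card = k → ∑ i ∈ S, ybar i = 0 →
        ∑ i ∈ S, d i ≤ 0 := by
      intro S hS hS0
      obtain ⟨hαS, hk1S⟩ := hactive S hS hS0
      have hsplitd : ∑ i ∈ S, d i = ∑ i ∈ S.filter (fun i : Fin m => (i:ℕ) < k0), d i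
          + ∑ i ∈ S.filter (fun i : Fin m => ¬ (i:ℕ) < k0), d i :=
        (Finset.sum_filter_add_sum_filter_not S _ d).symm
      have hT1 : S.filter (fun i : Fin m => (i:ℕ) < k0) = αf := by
        apply Finset.Subset.antisymm
        · intro i hi; exact (hmemαf i).mpr (Finset.mem_filter.mp hi).2
        · intro i hi; exact Finset.mem_filter.mpr ⟨hαS hi, (hmemαf i).mp hi⟩
      have hT2P : ∀ i ∈ S.filter (fun i : Fin m => ¬ (i:ℕ) < k0), Pβ i := by
        intro i hi
        obtain ⟨hiS, hik0⟩ := Finset.mem_filter.mp hi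
        exact ⟨by omega, hk1S i hiS⟩
      have hT2card : (S.filter (fun i : Fin m => ¬ (i:ℕ) < k0)).card = k - k0 := by
        have hcc := Finset.card_filter_add_card_filter_not
          (s := S) (p := fun i : Fin m => (i:ℕ) < k0)
        rw [hT1, hcardαf, hS] at hcc
        omega
      have hmap : ((S.filter (fun i : Fin m => ¬ (i:ℕ) < k0)).subtype Pβ).map
          (Function.Embedding.subtype Pβ) = S.filter (fun i : Fin m => ¬ (i:ℕ) < k0) := by
        rw [Finset.subtype_map, Finset.filter_true_of_mem hT2P]
      have hcard' : ((S.filter (fun i : Fin m => ¬ (i:ℕ) < k0)).subtype Pβ).card = k - k0 := by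
        have hc := Finset.card_map (f := Function.Embedding.subtype Pβ)
          (s := (S.filter (fun i : Fin m => ¬ (i:ℕ) < k0)).subtype Pβ)
        rw [hmap] at hc
        rw [← hc, hT2card]
      have hsum' : ∑ j ∈ (S.filter (fun i : Fin m => ¬ (i:ℕ) < k0)).subtype Pβ, d (j : Fin m)
          = ∑ i ∈ S.filter (fun i : Fin m => ¬ (i:ℕ) < k0), d i := by
        conv_rhs => rw [← hmap]
        rw [Finset.sum_map]
        simp [Function.Embedding.coe_subtype]
      have hle := le_topkSum (k - k0)
        (fun j : {i : Fin m // Pβ i} => d (j : Fin m))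
        ((S.filter (fun i : Fin m => ¬ (i:ℕ) < k0)).subtype Pβ) hcard'
      rw [hsplitd, hT1]
      have hβle : ∑ i ∈ S.filter (fun i : Fin m => ¬ (i:ℕ) < k0), d i ≤ B := by
        calc ∑ i ∈ S.filter (fun i : Fin m => ¬ (i:ℕ) < k0), d i
            = ∑ j ∈ (S.filter (fun i : Fin m => ¬ (i:ℕ) < k0)).subtype Pβ, d (j : Fin m) := hsum'.symm
          _ ≤ topkSum (k - k0) (fun j : {i : Fin m // Pβ i} => d (j : Fin m)) := hle
          _ ≤ B := htop
      linarith [hAeq]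
    have hFne : ((Finset.univ : Finset (Fin m)).powersetCard k).Nonempty := by
      obtain ⟨t, _, ht⟩ := Finset.exists_subset_card_eq
        (s := (Finset.univ : Finset (Fin m))) (n := k) (by simpa using hkm)
      exact ⟨t, Finset.mem_powersetCard_univ.mpr ht⟩
    set t0 := ((Finset.univ : Finset (Fin m)).powersetCard k).inf' hFne
      (fun S => if (∑ i ∈ S, d i) ≤ 0 then 1 else (-∑ i ∈ S, ybar i) / (∑ i ∈ S, d i)) with ht0
    have ht0pos : 0 < t0 := by
      rw [ht0, Finset.lt_inf'_iff]
      intro S hS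
      rw [Finset.mem_powersetCard_univ] at hS
      split_ifs with hd
      · norm_num
      · push_neg at hd
        have hy0 := hyS S hS
        have hyne : ∑ i ∈ S, ybar i ≠ 0 := by
          intro h0
          exact absurd (hactive' S hS h0) (by linarith)
        exact div_pos (by cases lt_or_eq_of_le hy0 with
          | inl h => linarith
          | inr h => exact absurd h hyne) hd
    refine subset_closure ⟨t0, ht0pos, ?_⟩
    show topkSum k (ybar + t0 • d) ≤ 0
    rw [topkSum_le_iff k (by simpa using hkm)]
    intro S hS
    have hsplit2 : ∑ i ∈ S, (ybar + t0 • d) i = ∑ i ∈ S, ybar i + t0 * ∑ i ∈ S, d i := by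
      rw [Finset.mul_sum, ← Finset.sum_add_distrib]
      apply Finset.sum_congr rfl
      intro i _; simp
    rw [hsplit2]
    rcases le_or_gt (∑ i ∈ S, d i) 0 with hd | hd
    · have := hyS S hS
      nlinarith
    · have hle2 : t0 ≤ (-∑ i ∈ S, ybar i) / (∑ i ∈ S, d i) := by
        have hinf := Finset.inf'_le
          (fun S => if (∑ i ∈ S, d i) ≤ 0 then 1 else (-∑ i ∈ S, ybar i) / (∑ i ∈ S, d i))
          (Finset.mem_powersetCard_univ.mpr hS)
        rw [if_neg (not_le.mpr hd)] at hinf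
        exact hinf
      have := (le_div_iff₀ hd).mp hle2
      linarith
end

section
/- Let 1 ≤ k ≤ m, let G : ℝ^n → ℝ^m be differentiable at x̄ ∈ ℝ^n with Jacobian JG(x̄) ∈ ℝ^{m×n}, set ȳ := G(x̄), and let β := { i : ȳ_i = ȳ_(k) } be the set of indices at which ȳ attains its k-th largest value. Then the constraint non-degeneracy condition JG(x̄)·ℝ^n + T^lin(ȳ) = ℝ^m holds if and only if the |β| × (n+1) matrix [ JG(x̄)_{β,:} 1_β ] (the rows of JG(x̄) indexed by β, augmented by a column of ones) has full row rank |β|. -/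
/-!
The tangent directions in `T^lin(ȳ)` are arbitrary off `β` and constant on `β`, so the
non-degeneracy condition only constrains the coordinates in `β`: it says that every `t ∈ ℝ^β`
is of the form `JG_{β,:} v + s 1_β`, i.e. that the augmented matrix `[JG_{β,:} 1_β]` is
surjective, which for a matrix over a field means that its rows are linearly independent.
-/

open Filter Topology Matrix

namespace Matrix

variable {K ι : Type*} [Field K]

theorem mulVec_surjective_iff_linearIndependent_row [Fintype ι] {κ : Type*} [Fintype κ]
    (M : Matrix ι κ K) : Function.Surjective M.mulVec ↔ LinearIndependent K M.row := by
  rw [linearIndependent_iff_card_eq_finrank_span, Set.finrank, ← rank_eq_finrank_span_row, rank,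
    ← coe_mulVecLin, ← LinearMap.range_eq_top, Submodule.eq_top_iff_finrank_eq,
    Module.finrank_fintype_fun_eq_card, eq_comm]

def augmentOnes {n : ℕ} (A : Matrix ι (Fin n) K) : Matrix ι (Fin (n + 1)) K :=
  of fun i j => if h : (j : ℕ) < n then A i ⟨j, h⟩ else 1

theorem augmentOnes_mulVec {n : ℕ} (A : Matrix ι (Fin n) K) (v : Fin (n + 1) → K) :
    augmentOnes A *ᵥ v = A *ᵥ Fin.init v + Function.const ι (v (Fin.last n)) := by
  ext i
  simp [augmentOnes, mulVec, dotProduct, Fin.sum_univ_castSucc, Fin.init]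

theorem mulVec_add_constOn_eq_univ_iff_surjective [Fintype ι] {n : ℕ} (A : Matrix ι (Fin n) K)
    (P : ι → Prop) :
    {w : ι → K | ∃ (v : Fin n → K) (u : ι → K), (∃ s : K, ∀ i, P i → u i = s) ∧
        w = A *ᵥ v + u} = Set.univ ↔
      Function.Surjective (augmentOnes (A.submatrix ((↑) : {i // P i} → ι) id)).mulVec := by
  classical
  simp only [Set.eq_univ_iff_forall, Set.mem_ofPred_eq]
  constructor
  · intro h t
    obtain ⟨v, u, ⟨s, hu⟩, hw⟩ := h fun i => if hi : P i then t ⟨i, hi⟩ else 0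
    refine ⟨Fin.snoc v s, funext fun i => ?_⟩
    have hwi : t i = (A *ᵥ v) i + s := by simpa [dif_pos i.2, hu i i.2] using congrFun hw i
    rw [augmentOnes_mulVec, hwi, Fin.init_snoc, Fin.snoc_last]
    rfl
  · intro h w
    obtain ⟨v', hv'⟩ := h fun i => w i
    refine ⟨Fin.init v', w - A *ᵥ Fin.init v', ⟨v' (Fin.last n), fun i hi => ?_⟩, by simp⟩
    have hwi : (A *ᵥ Fin.init v') i + v' (Fin.last n) = w i := by
      rw [← congrFun hv' ⟨i, hi⟩, augmentOnes_mulVec]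
      rfl
    rw [Pi.sub_apply, ← hwi, add_sub_cancel_left]

end Matrix

theorem constraint_nondegeneracy_iff_general
    (m n k : ℕ)
    (JG : Matrix (Fin m) (Fin n) ℝ)
    (ybar : Fin m → ℝ) :
    ({w : Fin m → ℝ | ∃ (v : Fin n → ℝ) (u : Fin m → ℝ),
        (∃ s : ℝ, ∀ i : Fin m, ybar i = ent (sortDesc ybar) k → u i = s) ∧
        w = JG.mulVec v + u} = Set.univ) ↔
      LinearIndependent ℝ
        (fun i : {i : Fin m // ybar i = ent (sortDesc ybar) k} =>
          fun j : Fin (n + 1) =>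
            if h : (j : ℕ) < n then JG i.1 ⟨(j : ℕ), h⟩ else 1) := by
  rw [mulVec_add_constOn_eq_univ_iff_surjective, mulVec_surjective_iff_linearIndependent_row]
  rfl

/-- Let `G` be differentiable at `x̄` with Jacobian `JG`, `ȳ = G(x̄)`, and
`β = {i : ȳ_i = ȳ_(k)}`.  The constraint non-degeneracy condition
`JG(x̄)·ℝⁿ + T^lin(ȳ) = ℝ^m` holds iff `[JG_{β,:} 1_β]` has full row rank `|β|`. -/
theorem constraint_nondegeneracy_iff
    (m n k : ℕ) (hk1 : 1 ≤ k) (hkm : k ≤ m)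
    (G : (Fin n → ℝ) → (Fin m → ℝ)) (xbar : Fin n → ℝ)
    (JG : Matrix (Fin m) (Fin n) ℝ)
    (hG : HasFDerivAt G (LinearMap.toContinuousLinearMap (Matrix.mulVecLin JG)) xbar)
    (ybar : Fin m → ℝ) (hy : ybar = G xbar) :
    ({w : Fin m → ℝ | ∃ (v : Fin n → ℝ) (u : Fin m → ℝ),
        (∃ s : ℝ, ∀ i : Fin m, ybar i = ent (sortDesc ybar) k → u i = s) ∧
        w = JG.mulVec v + u} = Set.univ) ↔
      LinearIndependent ℝ
        (fun i : {i : Fin m // ybar i = ent (sortDesc ybar) k} =>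
          fun j : Fin (n + 1) =>
            if h : (j : ℕ) < n then JG i.1 ⟨(j : ℕ), h⟩ else 1) :=
  constraint_nondegeneracy_iff_general m n k JG ybar
end

section
/- Let integers 0 ≤ k0 < k ≤ k1 ≤ m with α := {1,…,k0} and β := {k0+1,…,k1}, let μ_β ∈ [0,1]^{|β|} satisfy 1^⊤μ_β = k − k0, and define C and B as: C ∈ ℝ^{(|β|−1)×|β|} the forward-difference matrix with rows e_i^⊤ − e_{i+1}^⊤, and B := [1_α^⊤ μ_β^⊤ ; 0 C]. Set ρ := k² − 2k·k0 + k0·k1 (which is positive). Then B B^⊤ is invertible and the matrix Q := B^⊤(B B^⊤)^{−1}B ∈ ℝ^{(|α|+|β|)×(|α|+|β|)} is independent of the choice of μ_β and has the explicit block form: Q_{αα} = ρ^{−1}(k1 − k0)·1_α 1_α^⊤, Q_{αβ} = ρ^{−1}(k − k0)·1_α 1_β^⊤, Q_{βα} = Q_{αβ}^⊤, and Q_{ββ} = I_{|β|} − ρ^{−1}·k0·1_β 1_β^⊤. -/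
/-!
`Q` is the orthogonal projection onto the row space of `B`. With `ρ = k0·|β| + (k - k0)²` one
can write `Z = (B Bᵀ)⁻¹ B` down explicitly: its first row is `z₀ = ρ⁻¹ (|β|·1_α, (k - k0)·1_β)` and
its `q`-th row (`q ≥ 1`) is `q·u + 1_{β,<q} - S_q·z₀`, where `u = ρ⁻¹ ((k - k0)·1_α, -k0·1_β)`,
`1_{β,<q}` is the indicator of the first `q` indices of `β`, and `S_q` is the sum of the first `q`
entries of `μ_β`. Checking `B Zᵀ = I` and that `Bᵀ Z` is the
symmetric matrix of the statement is a telescoping computation along the difference rows of `B`,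
and these two identities alone force `B Bᵀ` to be invertible with `Bᵀ (B Bᵀ)⁻¹ B = Bᵀ Z`. Since
`Bᵀ Z` does not involve `μ_β`, neither does `Q`.
-/

open Filter Topology Matrix

/-- The forward-difference matrix `C ∈ ℝ^{(b-1)×b}` whose `i`-th row is `eᵢᵀ - eᵢ₊₁ᵀ`. -/
def Cmat (b : ℕ) : Matrix (Fin (b - 1)) (Fin b) ℝ :=
  Matrix.of fun i j =>
    if (j : ℕ) = (i : ℕ) then 1 else if (j : ℕ) = (i : ℕ) + 1 then -1 else 0

/-- The matrix `B = [1_αᵀ μ_βᵀ ; 0 C]` with `|α| = a`, `|β| = b`. -/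
def Bmat (a b : ℕ) (μβ : Fin b → ℝ) : Matrix (Fin b) (Fin (a + b)) ℝ :=
  Matrix.of fun i j =>
    if hi : (i : ℕ) = 0 then
      (if hj : (j : ℕ) < a then 1 else μβ ⟨(j : ℕ) - a, by have := j.isLt; omega⟩)
    else
      (if hj : (j : ℕ) < a then 0
       else Cmat b ⟨(i : ℕ) - 1, by have := i.isLt; omega⟩
              ⟨(j : ℕ) - a, by have := j.isLt; omega⟩)

namespace Matrix

variable {m n R : Type*} [Fintype m] [DecidableEq m] [Fintype n] [CommRing R]
  {B Z : Matrix m n R}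

theorem mul_transpose_mul_mul_transpose_eq_one (hBZ : B * Zᵀ = 1)
    (hsymm : (Bᵀ * Z)ᵀ = Bᵀ * Z) : B * Bᵀ * (Z * Zᵀ) = 1 := by
  rw [transpose_mul, transpose_transpose] at hsymm
  calc B * Bᵀ * (Z * Zᵀ) = B * (Bᵀ * Z) * Zᵀ := by simp only [Matrix.mul_assoc]
    _ = B * Zᵀ * (B * Zᵀ) := by rw [← hsymm]; simp only [Matrix.mul_assoc]
    _ = 1 := by rw [hBZ, Matrix.one_mul]

theorem isUnit_mul_transpose_of_mul_transpose_eq_one (hBZ : B * Zᵀ = 1)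
    (hsymm : (Bᵀ * Z)ᵀ = Bᵀ * Z) : IsUnit (B * Bᵀ) :=
  (isUnit_iff_isUnit_det _).mpr <|
    isUnit_det_of_right_inverse (mul_transpose_mul_mul_transpose_eq_one hBZ hsymm)

theorem transpose_mul_inv_mul_eq_of_mul_transpose_eq_one (hBZ : B * Zᵀ = 1)
    (hsymm : (Bᵀ * Z)ᵀ = Bᵀ * Z) : Bᵀ * (B * Bᵀ)⁻¹ * B = Bᵀ * Z := by
  have hZB : Zᵀ * B = Bᵀ * Z := by rwa [transpose_mul, transpose_transpose] at hsymm
  have hZBt : Z * Bᵀ = 1 := by simpa using congrArg transpose hBZ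
  rw [inv_eq_right_inv (mul_transpose_mul_mul_transpose_eq_one hBZ hsymm)]
  calc Bᵀ * (Z * Zᵀ) * B = Bᵀ * Z * (Zᵀ * B) := by simp only [Matrix.mul_assoc]
    _ = Bᵀ * (Z * Bᵀ) * Z := by rw [hZB]; simp only [Matrix.mul_assoc]
    _ = Bᵀ * Z := by rw [hZBt, Matrix.mul_one]

end Matrix

open Finset

noncomputable section
variable (a b k : ℕ) (ρ : ℝ)

-- In the notation of the header, `topRow = z₀`, `stepRow = u` and `lowerRow … q` is the `q`-th
-- row of `Zmat`; column indices are read in `ℕ`, so that `α = {j < a}`.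

def prefixSum {b : ℕ} (μ : Fin b → ℝ) (q : ℕ) : ℝ :=
  ∑ p : Fin b, if (p : ℕ) < q then μ p else 0

def topRow (j : ℕ) : ℝ := ρ⁻¹ * if j < a then (b : ℝ) else (k - a : ℝ)

def stepRow (j : ℕ) : ℝ := ρ⁻¹ * if j < a then (k - a : ℝ) else -(a : ℝ)

def lowerRow (μ : Fin b → ℝ) (q j : ℕ) : ℝ :=
  q * stepRow a k ρ j + (if a ≤ j ∧ j < a + q then 1 else 0) - prefixSum μ q * topRow a b k ρ j

def Zmat (μ : Fin b → ℝ) : Matrix (Fin b) (Fin (a + b)) ℝ :=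
  of fun q j => if (q : ℕ) = 0 then topRow a b k ρ j else lowerRow a b k ρ μ q j

def Qmat : Matrix (Fin (a + b)) (Fin (a + b)) ℝ :=
  of fun i j => if (i : ℕ) < a then topRow a b k ρ j else stepRow a k ρ j + if i = j then 1 else 0

end

section
variable {a b k : ℕ} {ρ : ℝ} {j : ℕ}

lemma topRow_of_lt (h : j < a) : topRow a b k ρ j = ρ⁻¹ * b := by simp [topRow, h]

lemma topRow_of_le (h : a ≤ j) : topRow a b k ρ j = ρ⁻¹ * (k - a) := by
  simp [topRow, h.not_gt]

lemma stepRow_of_lt (h : j < a) : stepRow a k ρ j = ρ⁻¹ * (k - a) := by simp [stepRow, h]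

lemma stepRow_of_le (h : a ≤ j) : stepRow a k ρ j = -(ρ⁻¹ * a) := by
  simp [stepRow, h.not_gt]

end

section
variable {b : ℕ} (μ : Fin b → ℝ)

@[simp] lemma prefixSum_zero : prefixSum μ 0 = 0 := by simp [prefixSum]

lemma prefixSum_self : prefixSum μ b = ∑ p, μ p := by simp [prefixSum]

lemma prefixSum_succ {p : ℕ} (hp : p < b) : prefixSum μ (p + 1) = prefixSum μ p + μ ⟨p, hp⟩ := by
  rw [prefixSum, prefixSum, ← Fintype.sum_ite_eq' ⟨p, hp⟩ μ, ← sum_add_distrib]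
  refine sum_congr rfl fun x _ => ?_
  rcases lt_trichotomy (x : ℕ) p with h | h | h
  · simp [Fin.ext_iff, h, h.ne, Nat.lt_succ_of_lt h]
  · simp [Fin.ext_iff, h]
  · simp [Fin.ext_iff, h.not_gt, h.ne', show ¬ (x : ℕ) < p + 1 by omega]

end

section
variable {a b k : ℕ} {ρ : ℝ} (μ : Fin b → ℝ)

lemma lowerRow_of_lt {q j : ℕ} (h : j < a) :
    lowerRow a b k ρ μ q j = q * (ρ⁻¹ * (k - a)) - prefixSum μ q * (ρ⁻¹ * b) := by
  simp [lowerRow, topRow_of_lt h, stepRow_of_lt h, h.not_ge]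

lemma lowerRow_add (q p : ℕ) :
    lowerRow a b k ρ μ q (a + p) =
      -(q * (ρ⁻¹ * a)) + (if p < q then 1 else 0) - prefixSum μ q * (ρ⁻¹ * (k - a)) := by
  simp [lowerRow, topRow_of_le, stepRow_of_le]

@[simp] lemma lowerRow_zero (j : ℕ) : lowerRow a b k ρ μ 0 j = 0 := by
  simp [lowerRow]

lemma lowerRow_succ_sub {p : ℕ} (hp : p < b) (j : ℕ) :
    lowerRow a b k ρ μ (p + 1) j - lowerRow a b k ρ μ p j =
      stepRow a k ρ j + (if j = a + p then 1 else 0) - μ ⟨p, hp⟩ * topRow a b k ρ j := by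
  simp only [lowerRow, prefixSum_succ μ hp]
  push_cast
  split_ifs <;> first | (exfalso; omega) | ring

lemma lowerRow_self (hsum : ∑ p, μ p = k - a) (hρ : ρ = a * b + (k - a) ^ 2) (hρ0 : ρ ≠ 0)
    {j : ℕ} (hj : j < a + b) : lowerRow a b k ρ μ b j = 0 := by
  simp only [lowerRow, stepRow, topRow, prefixSum_self, hsum]
  split_ifs <;> first | (exfalso; omega) | (field_simp; rw [hρ]; ring)

end

section
variable {a b : ℕ} (μ : Fin b → ℝ)

lemma Bmat_zero_dotProduct (hb : 0 < b) (f : ℕ → ℝ) :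
    Bmat a b μ ⟨0, hb⟩ ⬝ᵥ (fun j => f j) = ∑ i : Fin a, f i + ∑ p, μ p * f (a + p) := by
  rw [dotProduct, Fin.sum_univ_add]
  simp [Bmat]

lemma Bmat_succ_dotProduct {l : ℕ} (hl : l + 1 < b) (f : ℕ → ℝ) :
    Bmat a b μ ⟨l + 1, hl⟩ ⬝ᵥ (fun j => f j) = f (a + l) - f (a + l + 1) := by
  rw [dotProduct, Fin.sum_univ_add]
  simp only [Bmat, Cmat, of_apply, Nat.add_eq_zero_iff, one_ne_zero, and_false, ↓reduceDIte,
    Fin.val_castAdd, Fin.is_lt, zero_mul, sum_const_zero, Fin.val_natAdd, add_lt_iff_neg_left,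
    not_lt_zero, add_tsub_cancel_left, add_tsub_cancel_right, ite_mul, one_mul, neg_mul, zero_add]
  rw [Fintype.sum_eq_add ⟨l, by omega⟩ ⟨l + 1, hl⟩ (by simp [Fin.ext_iff]) fun x hx => by
    simp_all [Fin.ext_iff]]
  simp [sub_eq_add_neg, add_assoc]

lemma sum_Bmat_castAdd_mul (hb : 0 < b) (i : Fin a) (w : Fin b → ℝ) :
    ∑ l, Bmat a b μ l (Fin.castAdd b i) * w l = w ⟨0, hb⟩ := by
  rw [Fintype.sum_eq_single ⟨0, hb⟩ fun l hl => ?_]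
  · simp [Bmat]
  · simp [Bmat, Fin.ext_iff.not.mp hl]

lemma sum_Bmat_natAdd_mul (p : Fin b) (c : ℝ) {g : ℕ → ℝ} (hg0 : g 0 = 0) (hgb : g b = 0) :
    ∑ l : Fin b, Bmat a b μ l (Fin.natAdd a p) * (if (l : ℕ) = 0 then c else g l) =
      μ p * c + g (p + 1) - g p := by
  have hterm : ∀ l : Fin b, Bmat a b μ l (Fin.natAdd a p) * (if (l : ℕ) = 0 then c else g l) =
      (if (l : ℕ) = 0 then μ p * c else 0) + (if (l : ℕ) = p + 1 then g l else 0) -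
        (if (l : ℕ) = p then g l else 0) := by
    rintro ⟨_ | r, hr⟩
    · simp [Bmat, hg0]
    · simp only [Bmat, Cmat, of_apply, Fin.val_natAdd]
      split_ifs <;> first | (exfalso; omega) | simp
  rw [sum_congr rfl fun l _ => hterm l, Fin.sum_univ_eq_sum_range (fun x =>
      (if x = 0 then μ p * c else 0) + (if x = p + 1 then g x else 0) - (if x = p then g x else 0)),
    sum_sub_distrib, sum_add_distrib, sum_ite_eq', sum_ite_eq', sum_ite_eq']
  rcases Nat.lt_or_ge ((p : ℕ) + 1) b with hp | hp
  · simp [hp, Fin.pos p]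
  · simp [show (p : ℕ) + 1 = b by omega, hgb, Fin.pos p]
end

section
variable {a b k : ℕ} {ρ : ℝ} (μ : Fin b → ℝ)

lemma Bmat_zero_dotProduct_topRow (hb : 0 < b) (hsum : ∑ p, μ p = k - a)
    (hρ : ρ = a * b + (k - a) ^ 2) (hρ0 : ρ ≠ 0) :
    Bmat a b μ ⟨0, hb⟩ ⬝ᵥ (fun j => topRow a b k ρ j) = 1 := by
  subst hρ
  simp only [Bmat_zero_dotProduct, Fin.is_lt, topRow_of_lt, sum_const, card_univ, Fintype.card_fin,
    nsmul_eq_mul, le_add_iff_nonneg_right, zero_le, topRow_of_le, ← sum_mul, hsum]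
  field_simp

lemma Bmat_zero_dotProduct_lowerRow (hb : 0 < b) (hsum : ∑ p, μ p = k - a)
    (hρ : ρ = a * b + (k - a) ^ 2) (hρ0 : ρ ≠ 0) (q : ℕ) :
    Bmat a b μ ⟨0, hb⟩ ⬝ᵥ (fun j => lowerRow a b k ρ μ q j) = 0 := by
  subst hρ
  simp only [Bmat_zero_dotProduct, lowerRow_of_lt _ (Fin.is_lt _), lowerRow_add, sum_const,
    card_univ, Fintype.card_fin, nsmul_eq_mul, mul_add, mul_sub, sum_add_distrib, sum_sub_distrib,
    ← sum_mul, hsum, mul_ite, mul_one, mul_zero]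
  rw [← prefixSum]
  field_simp
  ring

lemma Bmat_succ_dotProduct_topRow {l : ℕ} (hl : l + 1 < b) :
    Bmat a b μ ⟨l + 1, hl⟩ ⬝ᵥ (fun j => topRow a b k ρ j) = 0 := by
  rw [Bmat_succ_dotProduct _ hl, topRow_of_le (by omega), topRow_of_le (by omega), sub_self]

lemma Bmat_succ_dotProduct_lowerRow {l : ℕ} (hl : l + 1 < b) (q : ℕ) :
    Bmat a b μ ⟨l + 1, hl⟩ ⬝ᵥ (fun j => lowerRow a b k ρ μ q j) = if q = l + 1 then 1 else 0 := by
  rw [Bmat_succ_dotProduct _ hl]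
  simp only [lowerRow, stepRow, topRow]
  split_ifs <;> first | (exfalso; omega) | ring

end

lemma Qmat_apply {a b k : ℕ} {ρ : ℝ} (i j : Fin (a + b)) :
    Qmat a b k ρ i j =
      if (i : ℕ) < a then (if (j : ℕ) < a then ρ⁻¹ * b else ρ⁻¹ * (k - a))
      else (if (j : ℕ) < a then ρ⁻¹ * (k - a) else (if i = j then 1 else 0) - ρ⁻¹ * a) := by
  by_cases hi : (i : ℕ) < a <;> by_cases hj : (j : ℕ) < a <;>
    simp [Qmat, hi, hj, topRow, stepRow, Fin.ext_iff] <;> first | omega | ring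

section
variable {a b k : ℕ} {ρ : ℝ} {μ : Fin b → ℝ}

lemma Bmat_mul_Zmat_transpose (hsum : ∑ p, μ p = k - a) (hρ : ρ = a * b + (k - a) ^ 2)
    (hρ0 : ρ ≠ 0) : Bmat a b μ * (Zmat a b k ρ μ)ᵀ = 1 := by
  ext ⟨_ | l, hl⟩ ⟨_ | q, hq⟩ <;> simp only [mul_apply', transpose_apply, Zmat, of_apply]
  · simp [Bmat_zero_dotProduct_topRow μ hl hsum hρ hρ0]
  · simp [Bmat_zero_dotProduct_lowerRow μ hl hsum hρ hρ0]
  · simp [Bmat_succ_dotProduct_topRow μ hl]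
  · simp [Bmat_succ_dotProduct_lowerRow μ hl, one_apply, eq_comm]

lemma Bmat_transpose_mul_Zmat (hb : 0 < b) (hsum : ∑ p, μ p = k - a) (hρ : ρ = a * b + (k - a) ^ 2)
    (hρ0 : ρ ≠ 0) : (Bmat a b μ)ᵀ * Zmat a b k ρ μ = Qmat a b k ρ := by
  ext i j
  simp only [mul_apply, transpose_apply, Zmat, of_apply]
  induction i using Fin.addCases with
  | left i => rw [sum_Bmat_castAdd_mul μ hb]; simp [Qmat]
  | right p =>
    rw [sum_Bmat_natAdd_mul μ p _ (g := fun q => lowerRow a b k ρ μ q j) (lowerRow_zero μ j)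
        (lowerRow_self μ hsum hρ hρ0 j.isLt),
      add_sub_assoc, lowerRow_succ_sub μ p.isLt]
    simp [Qmat, Fin.ext_iff, eq_comm]

lemma Qmat_transpose : (Qmat a b k ρ)ᵀ = Qmat a b k ρ := by
  ext i j
  simp only [transpose_apply, Qmat_apply, @eq_comm _ j i]
  split_ifs <;> rfl

end

theorem Bmat_projection_eq_Qmat {a b k : ℕ} {ρ : ℝ} {μ : Fin b → ℝ} (hb : 0 < b)
    (hsum : ∑ p, μ p = k - a) (hρ : ρ = a * b + (k - a) ^ 2) (hρ0 : ρ ≠ 0) :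
    IsUnit (Bmat a b μ * (Bmat a b μ)ᵀ) ∧
      (Bmat a b μ)ᵀ * (Bmat a b μ * (Bmat a b μ)ᵀ)⁻¹ * Bmat a b μ = Qmat a b k ρ := by
  have hBZ := Bmat_mul_Zmat_transpose hsum hρ hρ0
  have hBtZ := Bmat_transpose_mul_Zmat hb hsum hρ hρ0
  have hsymm : ((Bmat a b μ)ᵀ * Zmat a b k ρ μ)ᵀ = (Bmat a b μ)ᵀ * Zmat a b k ρ μ := by
    rw [hBtZ, Qmat_transpose]
  exact ⟨isUnit_mul_transpose_of_mul_transpose_eq_one hBZ hsymm,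
    (transpose_mul_inv_mul_eq_of_mul_transpose_eq_one hBZ hsymm).trans hBtZ⟩

theorem Q_explicit_form_general
    (k k0 k1 : ℕ) (hk0 : k0 < k) (hkk1 : k ≤ k1)
    (μβ : Fin (k1 - k0) → ℝ)
    (hsum : ∑ j, μβ j = (k : ℝ) - (k0 : ℝ))
    (ρ : ℝ) (hρ : ρ = (k : ℝ) ^ 2 - 2 * (k : ℝ) * (k0 : ℝ) + (k0 : ℝ) * (k1 : ℝ)) :
    0 < ρ ∧
    IsUnit (Bmat k0 (k1 - k0) μβ * (Bmat k0 (k1 - k0) μβ)ᵀ) ∧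
    (∀ i j : Fin (k0 + (k1 - k0)),
      ((Bmat k0 (k1 - k0) μβ)ᵀ *
          (Bmat k0 (k1 - k0) μβ * (Bmat k0 (k1 - k0) μβ)ᵀ)⁻¹ *
          Bmat k0 (k1 - k0) μβ) i j =
        if (i : ℕ) < k0 then
          (if (j : ℕ) < k0 then ρ⁻¹ * ((k1 : ℝ) - (k0 : ℝ))
           else ρ⁻¹ * ((k : ℝ) - (k0 : ℝ)))
        else
          (if (j : ℕ) < k0 then ρ⁻¹ * ((k : ℝ) - (k0 : ℝ))
           else (if i = j then 1 else 0) - ρ⁻¹ * (k0 : ℝ))) ∧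
    (∀ μβ' : Fin (k1 - k0) → ℝ, (∀ j, 0 ≤ μβ' j ∧ μβ' j ≤ 1) →
      (∑ j, μβ' j = (k : ℝ) - (k0 : ℝ)) →
      (Bmat k0 (k1 - k0) μβ')ᵀ *
          (Bmat k0 (k1 - k0) μβ' * (Bmat k0 (k1 - k0) μβ')ᵀ)⁻¹ *
          Bmat k0 (k1 - k0) μβ' =
        (Bmat k0 (k1 - k0) μβ)ᵀ *
          (Bmat k0 (k1 - k0) μβ * (Bmat k0 (k1 - k0) μβ)ᵀ)⁻¹ *
          Bmat k0 (k1 - k0) μβ) := by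
  have hb : 0 < k1 - k0 := by omega
  have hcast : ((k1 - k0 : ℕ) : ℝ) = k1 - k0 := Nat.cast_sub (by omega)
  have hρ' : ρ = k0 * (k1 - k0 : ℕ) + (k - k0) ^ 2 := by rw [hρ, hcast]; ring
  have hρpos : 0 < ρ := by
    have hk0' : (k0 : ℝ) < k := by exact_mod_cast hk0
    rw [hρ']; positivity
  have hproj (μ : Fin (k1 - k0) → ℝ) (hμ : ∑ j, μ j = (k : ℝ) - k0) :=
    Bmat_projection_eq_Qmat hb hμ hρ' hρpos.ne'
  obtain ⟨hunit, hQ⟩ := hproj μβ hsum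
  refine ⟨hρpos, hunit, fun i j => ?_, fun μ' _ hμ' => by rw [(hproj μ' hμ').2, hQ]⟩
  rw [hQ, Qmat_apply, hcast]

/-- With `ρ = k² - 2k·k0 + k0·k1 > 0`, the matrix `B Bᵀ` is invertible and
`Q = Bᵀ(B Bᵀ)⁻¹B` is independent of the choice of `μ_β` and has the explicit block form
`Q_αα = ρ⁻¹(k1-k0)·1 1ᵀ`, `Q_αβ = ρ⁻¹(k-k0)·1 1ᵀ`, `Q_βα = Q_αβᵀ`,
`Q_ββ = I - ρ⁻¹ k0 · 1 1ᵀ`. -/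
theorem Q_explicit_form
    (m k k0 k1 : ℕ) (hk0 : k0 < k) (hkk1 : k ≤ k1) (hk1m : k1 ≤ m)
    (μβ : Fin (k1 - k0) → ℝ)
    (hμ : ∀ j, 0 ≤ μβ j ∧ μβ j ≤ 1)
    (hsum : ∑ j, μβ j = (k : ℝ) - (k0 : ℝ))
    (ρ : ℝ) (hρ : ρ = (k : ℝ) ^ 2 - 2 * (k : ℝ) * (k0 : ℝ) + (k0 : ℝ) * (k1 : ℝ)) :
    0 < ρ ∧
    IsUnit (Bmat k0 (k1 - k0) μβ * (Bmat k0 (k1 - k0) μβ)ᵀ) ∧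
    (∀ i j : Fin (k0 + (k1 - k0)),
      ((Bmat k0 (k1 - k0) μβ)ᵀ *
          (Bmat k0 (k1 - k0) μβ * (Bmat k0 (k1 - k0) μβ)ᵀ)⁻¹ *
          Bmat k0 (k1 - k0) μβ) i j =
        if (i : ℕ) < k0 then
          (if (j : ℕ) < k0 then ρ⁻¹ * ((k1 : ℝ) - (k0 : ℝ))
           else ρ⁻¹ * ((k : ℝ) - (k0 : ℝ)))
        else
          (if (j : ℕ) < k0 then ρ⁻¹ * ((k : ℝ) - (k0 : ℝ))
           else (if i = j then 1 else 0) - ρ⁻¹ * (k0 : ℝ))) ∧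
    (∀ μβ' : Fin (k1 - k0) → ℝ, (∀ j, 0 ≤ μβ' j ∧ μβ' j ≤ 1) →
      (∑ j, μβ' j = (k : ℝ) - (k0 : ℝ)) →
      (Bmat k0 (k1 - k0) μβ')ᵀ *
          (Bmat k0 (k1 - k0) μβ' * (Bmat k0 (k1 - k0) μβ')ᵀ)⁻¹ *
          Bmat k0 (k1 - k0) μβ' =
        (Bmat k0 (k1 - k0) μβ)ᵀ *
          (Bmat k0 (k1 - k0) μβ * (Bmat k0 (k1 - k0) μβ)ᵀ)⁻¹ *
          Bmat k0 (k1 - k0) μβ) :=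
  Q_explicit_form_general k k0 k1 hk0 hkk1 μβ hsum ρ hρ
end
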